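/- arXiv:math/0312346 — 6 statements merged into one kernel-verified Lean document; each statement's English description precedes it below -/
import Mathlib

section
/- Let (X,μ) be a standard probability space with a countable group Γ acting ergodically by measure-preserving transformations. Then for any measurable sets E, F ⊆ X with μ(E) = μ(F) > 0, there exists a measure-preserving automorphism T of (X,μ) such that T(x) lies in the Γ-orbit of x for almost every x, and μ(T(E) Δ F) = 0. -/
/-!
Enumerate `Γ` as `γ₀, γ₁, …` and exhaust `E` and `F` greedily: at step `n`, move along
`γₙ` every point of what is left of `E` that `γₙ` sends into what is left of `F`. After step
`n`, `γₙ` links no point of the remainder of `E` to the remainder of `F`, so the final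
remainders, which have equal measure, are linked by no group element at all; by ergodicity
they are null. Doing the same for `Eᶜ` and `Fᶜ` gives countably many pieces `Dᵢ` partitioning
`X` up to a null set, together with `gᵢ ∈ Γ` such that the `gᵢ • Dᵢ` also partition `X` up to
a null set. Off the `Γ`-saturation of the exceptional null set, `x ↦ gᵢ • x` on `Dᵢ` is a
measure-preserving bijection, and it carries `E` onto `F`.
-/

open Function MeasureTheory Set Pointwise
open scoped symmDiff

section Peeling

variable {α : Type*} {s t : ℕ → Set α}

theorem antitone_of_succ_eq_diff (hs : ∀ n, s (n + 1) = s n \ t n) : Antitone s :=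
  antitone_nat_of_succ_le fun n => (hs n).trans_subset sdiff_subset

theorem pairwise_disjoint_of_succ_eq_diff (hs : ∀ n, s (n + 1) = s n \ t n)
    (ht : ∀ n, t n ⊆ s n) : Pairwise (Disjoint on t) := by
  refine (pairwise_disjoint_on t).2 fun m n hmn => ?_
  have hnm : t n ⊆ s m \ t m := (ht n).trans (hs m ▸ antitone_of_succ_eq_diff hs hmn)
  exact disjoint_sdiff_self_right.mono_right hnm

theorem diff_iUnion_subset_iInter_of_succ_eq_diff (hs : ∀ n, s (n + 1) = s n \ t n) :
    s 0 \ ⋃ n, t n ⊆ ⋂ n, s n := by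
  rintro x ⟨hx₀, hxt⟩
  refine mem_iInter.2 fun n => ?_
  induction n with
  | zero => exact hx₀
  | succ n ih => exact hs n ▸ ⟨ih, fun h => hxt (mem_iUnion.2 ⟨n, h⟩)⟩

end Peeling

section Ergodic

variable {G X : Type*} [Group G] [MulAction G X]

theorem smul_iUnion_smul_eq (g : G) (s : Set X) :
    g • ⋃ h : G, h • s = ⋃ h : G, h • s := by
  rw [smul_set_iUnion]
  simp_rw [smul_smul]
  exact (mul_left_surjective g).iUnion_comp (· • s)

variable [MeasurableSpace X] [MeasurableConstSMul G X] {μ : Measure X}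

theorem exists_measure_inter_smul_ne_zero [Countable G] [IsProbabilityMeasure μ]
    (herg : ∀ S : Set X, MeasurableSet S → (∀ g : G, (fun x : X => g • x) ⁻¹' S = S) →
      μ S = 0 ∨ μ S = 1)
    {A B : Set X} (hB : MeasurableSet B) (hA₀ : μ A ≠ 0) (hB₀ : μ B ≠ 0) :
    ∃ g : G, μ (A ∩ g • B) ≠ 0 := by
  set S := ⋃ g : G, g • B
  have hS : MeasurableSet S := .iUnion fun g => hB.const_smul g
  have hS_inv : ∀ g : G, (fun x : X => g • x) ⁻¹' S = S := fun g => by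
    rw [preimage_smul, smul_iUnion_smul_eq]
  have hSc : μ Sᶜ = 0 := by
    refine (prob_compl_eq_zero_iff hS).2 ((herg S hS hS_inv).resolve_left fun h => hB₀ ?_)
    exact measure_mono_null (subset_iUnion_of_subset 1 (one_smul G B).superset) h
  by_contra! h
  refine hA₀ (measure_mono_null ?_ (measure_union_null hSc (measure_iUnion_null h)))
  intro x hx
  by_cases hxS : x ∈ S
  · obtain ⟨g, hg⟩ := mem_iUnion.1 hxS
    exact Or.inr (mem_iUnion.2 ⟨g, hx, hg⟩)
  · exact Or.inl hxS

end Ergodic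

section Greedy

variable {G X : Type*} [Group G] [MulAction G X]

def greedyRemainder (γ : ℕ → G) (A B : Set X) : ℕ → Set X × Set X
  | 0 => (A, B)
  | n + 1 => ((greedyRemainder γ A B n).1 \ (γ n)⁻¹ • (greedyRemainder γ A B n).2,
      (greedyRemainder γ A B n).2 \ γ n • (greedyRemainder γ A B n).1)

def greedyPiece (γ : ℕ → G) (A B : Set X) (n : ℕ) : Set X :=
  (greedyRemainder γ A B n).1 ∩ (γ n)⁻¹ • (greedyRemainder γ A B n).2

variable (γ : ℕ → G) (A B : Set X)

theorem greedyRemainder_succ_fst (n : ℕ) :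
    (greedyRemainder γ A B (n + 1)).1 = (greedyRemainder γ A B n).1 \ greedyPiece γ A B n :=
  sdiff_self_inter.symm

theorem smul_greedyPiece (n : ℕ) :
    γ n • greedyPiece γ A B n =
      γ n • (greedyRemainder γ A B n).1 ∩ (greedyRemainder γ A B n).2 := by
  rw [greedyPiece, smul_set_inter, smul_inv_smul]

theorem greedyRemainder_succ_snd (n : ℕ) :
    (greedyRemainder γ A B (n + 1)).2 =
      (greedyRemainder γ A B n).2 \ γ n • greedyPiece γ A B n := by
  rw [smul_greedyPiece, sdiff_inter_self_eq_sdiff]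
  rfl

theorem antitone_greedyRemainder_fst : Antitone fun n => (greedyRemainder γ A B n).1 :=
  antitone_of_succ_eq_diff (greedyRemainder_succ_fst γ A B)

theorem antitone_greedyRemainder_snd : Antitone fun n => (greedyRemainder γ A B n).2 :=
  antitone_of_succ_eq_diff (greedyRemainder_succ_snd γ A B)

theorem greedyPiece_subset (n : ℕ) : greedyPiece γ A B n ⊆ (greedyRemainder γ A B n).1 :=
  inter_subset_left

theorem smul_greedyPiece_subset (n : ℕ) :
    γ n • greedyPiece γ A B n ⊆ (greedyRemainder γ A B n).2 :=
  smul_greedyPiece γ A B n ▸ inter_subset_right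

theorem disjoint_iInter_greedyRemainder (n : ℕ) :
    Disjoint (⋂ k, (greedyRemainder γ A B k).1)
      ((γ n)⁻¹ • ⋂ k, (greedyRemainder γ A B k).2) := by
  refine Disjoint.mono (iInter_subset _ (n + 1)) (smul_set_mono (iInter_subset _ n)) ?_
  exact disjoint_sdiff_left

end Greedy

section GreedyMeasure

variable {G X : Type*} [Group G] [MulAction G X] [MeasurableSpace X] [MeasurableConstSMul G X]
  {μ : Measure X} [SMulInvariantMeasure G X μ] (γ : ℕ → G) {A B : Set X}

theorem measurableSet_greedyRemainder (hA : MeasurableSet A) (hB : MeasurableSet B) (n : ℕ) :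
    MeasurableSet (greedyRemainder γ A B n).1 ∧ MeasurableSet (greedyRemainder γ A B n).2 := by
  induction n with
  | zero => exact ⟨hA, hB⟩
  | succ n ih => exact ⟨ih.1.diff (ih.2.const_smul _), ih.2.diff (ih.1.const_smul _)⟩

theorem measurableSet_greedyPiece (hA : MeasurableSet A) (hB : MeasurableSet B) (n : ℕ) :
    MeasurableSet (greedyPiece γ A B n) :=
  have h := measurableSet_greedyRemainder γ hA hB n
  h.1.inter (h.2.const_smul _)

theorem measure_greedyRemainder_fst_eq_snd [IsFiniteMeasure μ] (hA : MeasurableSet A)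
    (hB : MeasurableSet B) (hAB : μ A = μ B) (n : ℕ) :
    μ (greedyRemainder γ A B n).1 = μ (greedyRemainder γ A B n).2 := by
  induction n with
  | zero => exact hAB
  | succ n ih =>
    have hP := (measurableSet_greedyPiece γ hA hB n).nullMeasurableSet (μ := μ)
    rw [greedyRemainder_succ_fst, greedyRemainder_succ_snd,
      measure_sdiff (greedyPiece_subset γ A B n) hP (measure_ne_top μ _),
      measure_sdiff (smul_greedyPiece_subset γ A B n) (hP.smul _) (measure_ne_top μ _),
      measure_smul, ih]

theorem measure_iInter_greedyRemainder_eq_zero [Countable G] [IsProbabilityMeasure μ]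
    (herg : ∀ S : Set X, MeasurableSet S → (∀ g : G, (fun x : X => g • x) ⁻¹' S = S) →
      μ S = 0 ∨ μ S = 1)
    (hγ : Surjective γ) (hA : MeasurableSet A) (hB : MeasurableSet B) (hAB : μ A = μ B) :
    μ (⋂ n, (greedyRemainder γ A B n).1) = 0 ∧ μ (⋂ n, (greedyRemainder γ A B n).2) = 0 := by
  have hm := measurableSet_greedyRemainder γ hA hB
  have heq : μ (⋂ n, (greedyRemainder γ A B n).1) = μ (⋂ n, (greedyRemainder γ A B n).2) := by
    rw [(antitone_greedyRemainder_fst γ A B).measure_iInter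
        (fun n => (hm n).1.nullMeasurableSet) ⟨0, measure_ne_top μ _⟩,
      (antitone_greedyRemainder_snd γ A B).measure_iInter
        (fun n => (hm n).2.nullMeasurableSet) ⟨0, measure_ne_top μ _⟩]
    simp_rw [measure_greedyRemainder_fst_eq_snd γ hA hB hAB]
  rw [← heq, and_self]
  by_contra h
  obtain ⟨g, hg⟩ := exists_measure_inter_smul_ne_zero herg
    (.iInter fun n => (hm n).2) h (heq ▸ h)
  obtain ⟨n, hn⟩ := hγ g⁻¹
  rw [← inv_inv g, ← hn, (disjoint_iInter_greedyRemainder γ A B n).inter_eq] at hg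
  exact hg measure_empty

end GreedyMeasure

section Matching

variable {G X : Type*} [Group G] [MulAction G X] [MeasurableSpace X]

/-- `x ↦ g i • x` on the pieces `D i` carries `A` onto `B` up to null sets. -/
structure IsPieceMatching {ι : Type*} (μ : Measure X) (D : ι → Set X) (g : ι → G)
    (A B : Set X) : Prop where
  measurableSet : ∀ i, MeasurableSet (D i)
  subset_left : ∀ i, D i ⊆ A
  subset_right : ∀ i, g i • D i ⊆ B
  pairwise_disjoint_left : Pairwise (Disjoint on D)
  pairwise_disjoint_right : Pairwise (Disjoint on fun i => g i • D i)
  measure_diff_left : μ (A \ ⋃ i, D i) = 0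
  measure_diff_right : μ (B \ ⋃ i, g i • D i) = 0

variable [MeasurableConstSMul G X] {μ : Measure X}

theorem isPieceMatching_greedyPiece [Countable G] [SMulInvariantMeasure G X μ]
    [IsProbabilityMeasure μ]
    (herg : ∀ S : Set X, MeasurableSet S → (∀ g : G, (fun x : X => g • x) ⁻¹' S = S) →
      μ S = 0 ∨ μ S = 1)
    {γ : ℕ → G} (hγ : Surjective γ) {A B : Set X} (hA : MeasurableSet A)
    (hB : MeasurableSet B) (hAB : μ A = μ B) :
    IsPieceMatching μ (greedyPiece γ A B) γ A B := by
  have hfst := greedyRemainder_succ_fst γ A B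
  have hsnd := greedyRemainder_succ_snd γ A B
  have hnull := measure_iInter_greedyRemainder_eq_zero γ herg hγ hA hB hAB
  exact {
    measurableSet := measurableSet_greedyPiece γ hA hB
    subset_left := fun n => (greedyPiece_subset γ A B n).trans
      (antitone_greedyRemainder_fst γ A B n.zero_le)
    subset_right := fun n => (smul_greedyPiece_subset γ A B n).trans
      (antitone_greedyRemainder_snd γ A B n.zero_le)
    pairwise_disjoint_left := pairwise_disjoint_of_succ_eq_diff hfst (greedyPiece_subset γ A B)
    pairwise_disjoint_right :=
      pairwise_disjoint_of_succ_eq_diff hsnd (smul_greedyPiece_subset γ A B)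
    measure_diff_left := measure_mono_null (diff_iUnion_subset_iInter_of_succ_eq_diff
      (s := fun n => (greedyRemainder γ A B n).1) hfst) hnull.1
    measure_diff_right := measure_mono_null (diff_iUnion_subset_iInter_of_succ_eq_diff
      (s := fun n => (greedyRemainder γ A B n).2) hsnd) hnull.2 }

end Matching

section SumElim

variable {ι κ X : Type*}

theorem pairwise_disjoint_sum {F : ι ⊕ κ → Set X}
    (hl : Pairwise (Disjoint on fun i => F (.inl i)))
    (hr : Pairwise (Disjoint on fun j => F (.inr j)))
    (hlr : ∀ i j, Disjoint (F (.inl i)) (F (.inr j))) :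
    Pairwise (Disjoint on F) := by
  rintro (i | i) (j | j) hij
  · exact hl fun h => hij (congrArg _ h)
  · exact hlr i j
  · exact (hlr j i).symm
  · exact hr fun h => hij (congrArg _ h)

theorem measure_union_diff_iUnion_sum_eq_zero [MeasurableSpace X] {μ : Measure X}
    {F : ι ⊕ κ → Set X} {A A' : Set X} (hl : μ (A \ ⋃ i, F (.inl i)) = 0)
    (hr : μ (A' \ ⋃ j, F (.inr j)) = 0) : μ ((A ∪ A') \ ⋃ k, F k) = 0 := by
  refine measure_mono_null ?_ (measure_union_null hl hr)
  rw [iUnion_sum, union_sdiff_distrib]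
  exact union_subset_union (sdiff_subset_sdiff_right subset_union_left)
    (sdiff_subset_sdiff_right subset_union_right)

variable {G : Type*} [Group G] [MulAction G X] [MeasurableSpace X] {μ : Measure X}
  {D : ι → Set X} {D' : κ → Set X} {g : ι → G} {g' : κ → G} {A A' B B' : Set X}

theorem IsPieceMatching.sumElim (h : IsPieceMatching μ D g A B)
    (h' : IsPieceMatching μ D' g' A' B') (hA : Disjoint A A') (hB : Disjoint B B') :
    IsPieceMatching μ (Sum.elim D D') (Sum.elim g g') (A ∪ A') (B ∪ B') where
  measurableSet := Sum.rec h.measurableSet h'.measurableSet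
  subset_left := Sum.rec (fun i => (h.subset_left i).trans subset_union_left)
    fun j => (h'.subset_left j).trans subset_union_right
  subset_right := Sum.rec (fun i => (h.subset_right i).trans subset_union_left)
    fun j => (h'.subset_right j).trans subset_union_right
  pairwise_disjoint_left := pairwise_disjoint_sum h.pairwise_disjoint_left
    h'.pairwise_disjoint_left fun i j => hA.mono (h.subset_left i) (h'.subset_left j)
  pairwise_disjoint_right := pairwise_disjoint_sum h.pairwise_disjoint_right
    h'.pairwise_disjoint_right fun i j => hB.mono (h.subset_right i) (h'.subset_right j)
  measure_diff_left := measure_union_diff_iUnion_sum_eq_zero h.measure_diff_left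
    h'.measure_diff_left
  measure_diff_right := measure_union_diff_iUnion_sum_eq_zero h.measure_diff_right
    h'.measure_diff_right

end SumElim

section Gluing

variable {ι X : Type*} {D : ι → Set X}

theorem measure_eq_tsum_inter [Countable ι] [MeasurableSpace X] (μ : Measure X)
    (hD : ∀ i, MeasurableSet (D i)) (hDd : Pairwise (Disjoint on D)) (hDU : ⋃ i, D i = univ)
    {s : Set X} (hs : MeasurableSet s) : μ s = ∑' i, μ (s ∩ D i) := by
  conv_lhs => rw [← inter_univ s, ← hDU, inter_iUnion]
  exact measure_iUnion (fun i j hij => (hDd hij).mono inter_subset_right inter_subset_right)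
    fun i => hs.inter (hD i)

theorem measurable_of_forall_mem_eq [Countable ι] {Y : Type*} [MeasurableSpace X]
    [MeasurableSpace Y] (hD : ∀ i, MeasurableSet (D i)) (hDU : ⋃ i, D i = univ)
    {f : X → Y} {F : ι → X → Y} (hF : ∀ i, Measurable (F i))
    (hfF : ∀ i, ∀ x ∈ D i, f x = F i x) :
    Measurable f := by
  intro S hS
  have hpre : f ⁻¹' S = ⋃ i, D i ∩ F i ⁻¹' S := by
    ext x
    obtain ⟨i, hi⟩ := mem_iUnion.1 (hDU.symm ▸ mem_univ x : x ∈ ⋃ i, D i)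
    simp only [mem_preimage, mem_iUnion, mem_inter_iff]
    refine ⟨fun hx => ⟨i, hi, hfF i x hi ▸ hx⟩, fun ⟨j, hj, hx⟩ => (hfF j x hj).symm ▸ hx⟩
  rw [hpre]
  exact .iUnion fun i => (hD i).inter (hF i hS)

variable {G : Type*} [Group G] [MulAction G X] {g : ι → G}

theorem exists_equiv_forall_mem_eq_smul (hDd : Pairwise (Disjoint on D))
    (hDU : ⋃ i, D i = univ) (hRd : Pairwise (Disjoint on fun i => g i • D i))
    (hRU : ⋃ i, g i • D i = univ) :
    ∃ T : X ≃ X, (∀ i, ∀ x ∈ D i, T x = g i • x) ∧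
      ∀ i, ∀ y ∈ g i • D i, T.symm y = (g i)⁻¹ • y := by
  choose k hk using fun x => mem_iUnion.1 (hDU.symm ▸ mem_univ x : x ∈ ⋃ i, D i)
  choose l hl using fun y => mem_iUnion.1 (hRU.symm ▸ mem_univ y : y ∈ ⋃ i, g i • D i)
  have hk_eq : ∀ i x, x ∈ D i → k x = i := fun i x hx =>
    of_not_not fun h => disjoint_left.1 (hDd h) (hk x) hx
  have hl_eq : ∀ i y, y ∈ g i • D i → l y = i := fun i y hy =>
    of_not_not fun h => disjoint_left.1 (hRd h) (hl y) hy
  refine ⟨⟨fun x => g (k x) • x, fun y => (g (l y))⁻¹ • y, fun x => ?_, fun y => ?_⟩,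
    fun i x hx => by simp only [Equiv.coe_fn_mk, hk_eq i x hx],
    fun i y hy => by simp only [Equiv.coe_fn_symm_mk, hl_eq i y hy]⟩
  · simp only [hl_eq _ _ (smul_mem_smul_set (hk x)), inv_smul_smul]
  · simp only [hk_eq _ _ (mem_smul_set_iff_inv_smul_mem.1 (hl y)), smul_inv_smul]

theorem measurePreserving_of_forall_mem_eq_smul [Countable ι] [MeasurableSpace X]
    [MeasurableConstSMul G X] {μ : Measure X} [SMulInvariantMeasure G X μ]
    (hD : ∀ i, MeasurableSet (D i)) (hDd : Pairwise (Disjoint on D)) (hDU : ⋃ i, D i = univ)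
    (hRd : Pairwise (Disjoint on fun i => g i • D i)) (hRU : ⋃ i, g i • D i = univ)
    {f : X → X} (hf : Measurable f) (hfD : ∀ i, ∀ x ∈ D i, f x = g i • x) :
    MeasurePreserving f μ μ := by
  refine ⟨hf, Measure.ext fun S hS => ?_⟩
  have hpiece : ∀ i, f ⁻¹' S ∩ D i = (g i • ·) ⁻¹' (S ∩ g i • D i) := fun i => by
    ext x
    simp only [mem_inter_iff, mem_preimage, smul_mem_smul_set_iff]
    exact ⟨fun ⟨hS, hx⟩ => ⟨hfD i x hx ▸ hS, hx⟩,
      fun ⟨hS, hx⟩ => ⟨(hfD i x hx).symm ▸ hS, hx⟩⟩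
  rw [Measure.map_apply hf hS, measure_eq_tsum_inter μ hD hDd hDU (hf hS),
    measure_eq_tsum_inter μ (fun i => (hD i).const_smul (g i)) hRd hRU hS]
  simp only [hpiece, measure_preimage_smul]

theorem exists_measurableEquiv_forall_mem_eq_smul [Countable ι] [MeasurableSpace X]
    [MeasurableConstSMul G X] {μ : Measure X} [SMulInvariantMeasure G X μ]
    (hD : ∀ i, MeasurableSet (D i)) (hDd : Pairwise (Disjoint on D)) (hDU : ⋃ i, D i = univ)
    (hRd : Pairwise (Disjoint on fun i => g i • D i)) (hRU : ⋃ i, g i • D i = univ) :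
    ∃ T : X ≃ᵐ X, MeasurePreserving T μ μ ∧ ∀ i, ∀ x ∈ D i, T x = g i • x := by
  obtain ⟨T, hT, hTsymm⟩ := exists_equiv_forall_mem_eq_smul hDd hDU hRd hRU
  have hTm : Measurable T :=
    measurable_of_forall_mem_eq hD hDU (fun i => measurable_const_smul (g i)) hT
  have hTsymm_m : Measurable T.symm :=
    measurable_of_forall_mem_eq (fun i => (hD i).const_smul (g i)) hRU
      (fun i => measurable_const_smul (g i)⁻¹) hTsymm
  exact ⟨⟨T, hTm, hTsymm_m⟩,
    measurePreserving_of_forall_mem_eq_smul hD hDd hDU hRd hRU hTm hT, hT⟩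

end Gluing

section OptionElim

variable {ι X : Type*} {D : ι → Set X} {N : Set X}

theorem pairwise_disjoint_optionElim_sdiff (hD : Pairwise (Disjoint on D)) :
    Pairwise (Disjoint on fun o : Option ι => o.elim N fun i => D i \ N) := by
  rintro (_ | i) (_ | j) hij
  · exact absurd rfl hij
  · exact disjoint_sdiff_self_right
  · exact disjoint_sdiff_self_left
  · exact (hD fun h => hij (congrArg some h)).mono sdiff_subset sdiff_subset

theorem iUnion_optionElim_sdiff (hN : univ \ ⋃ i, D i ⊆ N) :
    ⋃ o : Option ι, o.elim N (fun i => D i \ N) = univ := by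
  refine eq_univ_of_forall fun x => ?_
  by_cases hx : x ∈ N
  · exact mem_iUnion.2 ⟨none, hx⟩
  · obtain ⟨i, hi⟩ := mem_iUnion.1 (not_not.1 fun h => hx (hN ⟨mem_univ x, h⟩))
    exact mem_iUnion.2 ⟨some i, hi, hx⟩

end OptionElim

section AEGluing

variable {ι G X : Type*} [Group G] [MulAction G X] [MeasurableSpace X]
  [MeasurableConstSMul G X] {μ : Measure X} {D : ι → Set X} {g : ι → G}

theorem IsPieceMatching.exists_measurePreserving_ae_eq_smul [Countable ι] [Countable G]
    [SMulInvariantMeasure G X μ] (h : IsPieceMatching μ D g univ univ) :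
    ∃ T : X ≃ᵐ X, MeasurePreserving T μ μ ∧ ∀ᵐ x ∂μ, ∃ i, x ∈ D i ∧ T x = g i • x := by
  set N₀ := (univ \ ⋃ i, D i) ∪ (univ \ ⋃ i, g i • D i)
  set N := ⋃ γ : G, γ • N₀
  have hN₀m : MeasurableSet N₀ := (MeasurableSet.univ.diff (.iUnion h.measurableSet)).union
    (MeasurableSet.univ.diff (.iUnion fun i => (h.measurableSet i).const_smul (g i)))
  have hNm : MeasurableSet N := .iUnion fun γ => hN₀m.const_smul γ
  have hN : μ N = 0 := measure_iUnion_null fun γ =>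
    measure_smul_null (measure_union_null h.measure_diff_left h.measure_diff_right) γ
  have hN₀N : N₀ ⊆ N := subset_iUnion_of_subset 1 (one_smul G N₀).superset
  -- `N` is `G`-invariant, so it can be added as one more piece, moved by `1`.
  have hR : (fun o : Option ι => o.elim 1 g • o.elim N fun i => D i \ N) =
      fun o => o.elim N fun i => g i • D i \ N := by
    funext o
    cases o with
    | none => exact one_smul G N
    | some i => exact smul_set_sdiff.trans (congrArg _ (smul_iUnion_smul_eq (g i) N₀))
  obtain ⟨T, hT, hTD⟩ := exists_measurableEquiv_forall_mem_eq_smul (μ := μ)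
    (D := fun o : Option ι => o.elim N fun i => D i \ N) (g := fun o => o.elim 1 g)
    (by rintro (_ | i); exacts [hNm, (h.measurableSet i).diff hNm])
    (pairwise_disjoint_optionElim_sdiff h.pairwise_disjoint_left)
    (iUnion_optionElim_sdiff (subset_union_left.trans hN₀N))
    (hR ▸ pairwise_disjoint_optionElim_sdiff h.pairwise_disjoint_right)
    (hR ▸ iUnion_optionElim_sdiff (subset_union_right.trans hN₀N))
  refine ⟨T, hT, ?_⟩
  filter_upwards [measure_eq_zero_iff_ae_notMem.1 hN] with x hx
  obtain ⟨i, hi⟩ := mem_iUnion.1 (not_not.1 fun h' => hx (hN₀N (Or.inl ⟨mem_univ x, h'⟩)))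
  exact ⟨i, hi, hTD (some i) x ⟨hi, hx⟩⟩

end AEGluing

theorem MeasureTheory.MeasurePreserving.measure_image_symmDiff_eq_zero {X Y : Type*}
    [MeasurableSpace X] [MeasurableSpace Y] {μ : Measure X} {ν : Measure Y} {T : X ≃ᵐ Y}
    (hT : MeasurePreserving T μ ν) {E : Set X} {F : Set Y} (h : ∀ᵐ x ∂μ, x ∈ E ↔ T x ∈ F) :
    ν ((T '' E) ∆ F) = 0 := by
  have hsub : (T '' E) ∆ F ⊆ T.symm ⁻¹' {x | ¬(x ∈ E ↔ T x ∈ F)} := by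
    intro y hy
    rw [T.image_eq_preimage_symm] at hy
    simp only [mem_preimage, mem_ofPred_eq, T.apply_symm_apply]
    rw [mem_symmDiff] at hy
    tauto
  exact measure_mono_null hsub ((hT.symm.measure_preimage_equiv _).trans (ae_iff.1 h))

theorem full_group_transitive_on_equal_measure_sets_general
    {X : Type*} [MeasurableSpace X] (μ : Measure X) [IsProbabilityMeasure μ]
    (Γ : Type*) [Group Γ] [Countable Γ] [MulAction Γ X]
    (hmeas : ∀ γ : Γ, Measurable fun x : X => γ • x)
    (hmp : ∀ γ : Γ, MeasurePreserving (fun x : X => γ • x) μ μ)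
    (herg : ∀ A : Set X, MeasurableSet A → (∀ γ : Γ, (fun x : X => γ • x) ⁻¹' A = A) →
      μ A = 0 ∨ μ A = 1)
    (E F : Set X) (hE : MeasurableSet E) (hF : MeasurableSet F)
    (hEF : μ E = μ F) :
    ∃ T : X ≃ᵐ X, MeasurePreserving T μ μ ∧
      (∀ᵐ x ∂μ, ∃ γ : Γ, T x = γ • x) ∧
      μ (symmDiff (T '' E) F) = 0 := by
  have : MeasurableConstSMul Γ X := ⟨hmeas⟩
  have : SMulInvariantMeasure Γ X μ :=
    ⟨fun γ _ hs => (hmp γ).measure_preimage hs.nullMeasurableSet⟩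
  obtain ⟨γ, hγ⟩ := exists_surjective_nat Γ
  have hEFc : μ Eᶜ = μ Fᶜ := by rw [prob_compl_eq_one_sub hE, prob_compl_eq_one_sub hF, hEF]
  have h₁ := isPieceMatching_greedyPiece herg hγ hE hF hEF
  have h₂ := isPieceMatching_greedyPiece herg hγ hE.compl hF.compl hEFc
  have hM := h₁.sumElim h₂ disjoint_compl_right disjoint_compl_right
  rw [union_compl_self, union_compl_self] at hM
  obtain ⟨T, hT, hTD⟩ := hM.exists_measurePreserving_ae_eq_smul
  refine ⟨T, hT, hTD.mono fun x ⟨_, _, hx⟩ => ⟨_, hx⟩, hT.measure_image_symmDiff_eq_zero ?_⟩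
  filter_upwards [hTD] with x ⟨i, hxi, hTx⟩
  rw [hTx]
  rcases i with n | n
  · exact iff_of_true (h₁.subset_left n hxi) (h₁.subset_right n (smul_mem_smul_set hxi))
  · exact iff_of_false (h₂.subset_left n hxi) (h₂.subset_right n (smul_mem_smul_set hxi))

/-- In an ergodic measure-preserving action of a countable group `Γ` on a
standard probability space `(X, μ)`, for any measurable sets `E`, `F` of equal positive
measure there is an inner automorphism (full-group element) `T` with `μ(T(E) Δ F) = 0`. -/
theorem full_group_transitive_on_equal_measure_sets
    {X : Type*} [MeasurableSpace X] (μ : Measure X) [IsProbabilityMeasure μ]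
    (Γ : Type*) [Group Γ] [Countable Γ] [MulAction Γ X]
    (hmeas : ∀ γ : Γ, Measurable fun x : X => γ • x)
    (hmp : ∀ γ : Γ, MeasurePreserving (fun x : X => γ • x) μ μ)
    (herg : ∀ A : Set X, MeasurableSet A → (∀ γ : Γ, (fun x : X => γ • x) ⁻¹' A = A) →
      μ A = 0 ∨ μ A = 1)
    (E F : Set X) (hE : MeasurableSet E) (hF : MeasurableSet F)
    (hEF : μ E = μ F) (hpos : 0 < μ E) :
    ∃ T : X ≃ᵐ X, MeasurePreserving T μ μ ∧
      (∀ᵐ x ∂μ, ∃ γ : Γ, T x = γ • x) ∧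
      μ (symmDiff (T '' E) F) = 0 :=
  full_group_transitive_on_equal_measure_sets_general μ Γ hmeas hmp herg E F hE hF hEF
end

section
/- Let Γ be a countable group with infinite conjugacy classes (every nontrivial conjugacy class is infinite) acting freely (mod 0), ergodically, and measure-preservingly on a standard probability space (X,μ). If T ∈ Aut(X,μ) commutes with the Γ-action (T(γ·x) = γ·T(x) for all γ and a.e. x) and T is inner for the orbit relation (i.e. T(x) = ξ_x · x for a measurable map x ↦ ξ_x ∈ Γ), then T is the identity almost everywhere. -/
open MeasureTheory Set

/-- For a free (mod 0), ergodic, measure-preserving action of an ICC countable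
group `Γ`, any automorphism `T` of `(X,μ)` commuting with the `Γ`-action which is inner for the
orbit relation (`T x = ξ x • x`) is the identity almost everywhere. -/
theorem commuting_inner_automorphism_is_identity
    {X : Type*} [MeasurableSpace X] (μ : Measure X) [IsProbabilityMeasure μ]
    (Γ : Type*) [Group Γ] [Countable Γ] [MeasurableSpace Γ] [MeasurableSingletonClass Γ]
    [MulAction Γ X]
    (hmeas : ∀ γ : Γ, Measurable fun x : X => γ • x)
    (hmp : ∀ γ : Γ, MeasurePreserving (fun x : X => γ • x) μ μ)
    (hICC : ∀ γ : Γ, γ ≠ 1 → {δ : Γ | IsConj γ δ}.Infinite)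
    (hfree : ∀ᵐ x ∂μ, ∀ γ : Γ, γ • x = x → γ = 1)
    (herg : ∀ A : Set X, MeasurableSet A → (∀ γ : Γ, (fun x : X => γ • x) ⁻¹' A = A) →
      μ A = 0 ∨ μ A = 1)
    (T : X → X) (hT : MeasurePreserving T μ μ)
    (hcomm : ∀ γ : Γ, ∀ᵐ x ∂μ, T (γ • x) = γ • T x)
    (ξ : X → Γ) (hξ : Measurable ξ)
    (hinner : ∀ᵐ x ∂μ, T x = ξ x • x) :
    ∀ᵐ x ∂μ, T x = x := by
  -- The cocycle identity: for a.e. x, ξ(γ•x) = γ * ξ x * γ⁻¹ for all γ.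
  have hcocycle : ∀ᵐ x ∂μ, ∀ γ : Γ, ξ (γ • x) = γ * ξ x * γ⁻¹ := by
    rw [ae_all_iff]
    intro γ
    have h1 : ∀ᵐ x ∂μ, T (γ • x) = ξ (γ • x) • (γ • x) :=
      (hmp γ).quasiMeasurePreserving.ae hinner
    filter_upwards [hcomm γ, hinner, h1, hfree] with x hc hi h1 hf
    -- ξ(γ•x) • (γ•x) = γ • (ξ x • x)
    have he : (ξ (γ • x) * γ) • x = (γ * ξ x) • x := by
      rw [mul_smul, mul_smul, ← h1, hc, hi]
    have : ((γ * ξ x)⁻¹ * (ξ (γ • x) * γ)) • x = x := by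
      rw [mul_smul, he, ← mul_smul, inv_mul_cancel, one_smul]
    have h0 := hf _ this
    have heq : γ * ξ x = ξ (γ • x) * γ := inv_mul_eq_one.mp h0
    rw [heq]
    group
  -- For each δ ≠ 1, μ (ξ ⁻¹' {δ}) = 0.
  have key : ∀ δ : Γ, δ ≠ 1 → μ (ξ ⁻¹' {δ}) = 0 := by
    intro δ hδ
    by_contra hpos
    have hc : 0 < μ (ξ ⁻¹' {δ}) := pos_iff_ne_zero.mpr hpos
    -- every conjugate class member's preimage has measure ≥ μ (ξ ⁻¹' {δ})
    have hge : ∀ ε : Γ, IsConj δ ε → μ (ξ ⁻¹' {δ}) ≤ μ (ξ ⁻¹' {ε}) := by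
      intro ε hconj
      obtain ⟨c, hce'⟩ := isConj_iff.mp hconj
      have hsub : ∀ᵐ x ∂μ, x ∈ ξ ⁻¹' {δ} → x ∈ (fun x : X => c • x) ⁻¹' (ξ ⁻¹' {ε}) := by
        filter_upwards [hcocycle] with x hx hmem
        simp only [mem_preimage, mem_singleton_iff] at hmem ⊢
        rw [hx c, hmem, hce']
      calc μ (ξ ⁻¹' {δ}) ≤ μ ((fun x : X => c • x) ⁻¹' (ξ ⁻¹' {ε})) :=
            measure_mono_ae hsub
        _ = μ (ξ ⁻¹' {ε}) := (hmp c).measure_preimage (hξ (measurableSet_singleton ε)).nullMeasurableSet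
    -- infinitely many disjoint sets with measure ≥ hc : contradiction
    have hfin : Set.Finite {ε : Γ | μ (ξ ⁻¹' {δ}) ≤ μ (ξ ⁻¹' {ε})} := by
      have := MeasureTheory.Measure.finite_const_le_meas_of_disjoint_iUnion μ
        (ε := μ (ξ ⁻¹' {δ})) hc
        (As := fun ε : Γ => ξ ⁻¹' {ε})
        (fun ε => hξ (measurableSet_singleton ε))
        (fun a b hab => Set.disjoint_left.mpr (by
          intro x hxa hxb
          simp only [mem_preimage, mem_singleton_iff] at hxa hxb
          exact hab (hxa ▸ hxb ▸ rfl)))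
        (by exact (measure_lt_top μ _).ne)
      exact this
    exact ((hICC δ hδ).mono fun ε hε => hge ε hε) hfin
  -- Hence ξ = 1 a.e.
  have hone : ∀ᵐ x ∂μ, ξ x = 1 := by
    have : μ {x | ξ x ≠ 1} = 0 := by
      have hsub : {x | ξ x ≠ 1} ⊆ ⋃ δ ∈ {δ : Γ | δ ≠ 1}, ξ ⁻¹' {δ} := by
        intro x hx
        exact mem_biUnion hx rfl
      refine measure_mono_null hsub ?_
      refine (measure_biUnion_null_iff (Set.to_countable _)).mpr ?_
      intro δ hδ
      exact key δ hδ
    exact this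
  filter_upwards [hinner, hone] with x hi h1
  rw [hi, h1, one_smul]
end

section
/- Let Γ act freely (mod 0), ergodically, and measure-preservingly on (X,μ), let τ be an automorphism of Γ, and let T be an automorphism of the orbit relation whose rearrangement cocycle satisfies α_T(γ,x) = ζ_{γ·x}⁻¹ τ(γ) ζ_x for some measurable map x ↦ ζ_x ∈ Γ. Then the map A: X → X defined by A(x) = ζ_x · T(x) is a measure-preserving automorphism of (X,μ) satisfying A(γ·x) = τ(γ)·A(x), and T factors as T = A ∘ J where J(x) = ξ_x⁻¹·x with ξ_x = τ⁻¹(ζ_x) is an inner automorphism of the orbit relation. -/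
/-!
The cocycle identity makes `A x = ζ x • T x` twisted-equivariant, and applying it at
`γ = ξ_x⁻¹` gives `A (J₀ x) = T x` a.e. for `J₀ x = ξ_x⁻¹ • x`; hence `J₀` is a.e. injective
because `T` is. Since `Γ` is countable, a map `x ↦ g x • x` is a countable patchwork of
translations, so it preserves the measure of every set on which it is injective. In finite
measure the image of `J₀` is therefore conull, and after discarding an invariant null set `J₀`
becomes a measure-preserving automorphism `J`. Then `A = T ∘ J⁻¹` a.e. preserves `μ`.
-/

open MeasureTheory Set Function
open scoped Pointwise

theorem measurable_smul_of_countable {Γ X α : Type*} [SMul Γ X] [MeasurableSpace X]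
    [MeasurableSpace α] [Countable Γ] [MeasurableSpace Γ] [MeasurableSingletonClass Γ]
    [MeasurableConstSMul Γ X] {g : α → Γ} {f : α → X} (hg : Measurable g) (hf : Measurable f) :
    Measurable fun a => g a • f a :=
  (measurable_from_prod_countable_left (f := fun p : X × Γ => p.2 • p.1)
    fun γ => measurable_const_smul γ).comp (hf.prodMk hg)

theorem Set.BijOn.bijective_piecewise_id {α : Type*} {f : α → α} {s : Set α}
    [∀ x, Decidable (x ∈ s)] (h : BijOn f s s) : Bijective (s.piecewise f id) := by
  refine ⟨(injective_piecewise_iff _).2 ⟨h.injOn, injOn_id _, fun x hx y hy hxy => ?_⟩,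
    fun y => ?_⟩
  · rw [id_eq] at hxy
    exact hy (hxy ▸ h.mapsTo hx)
  · by_cases hy : y ∈ s
    · obtain ⟨x, hx, rfl⟩ := h.surjOn hy
      exact ⟨x, piecewise_eq_of_mem _ _ _ hx⟩
    · exact ⟨y, piecewise_eq_of_notMem _ _ _ hy⟩

theorem exists_null_superset_preimage_eq {X : Type*} [MeasurableSpace X] {μ : Measure X}
    {f : X → X} (hf : Measure.QuasiMeasurePreserving f μ μ)
    (himage : ∀ s, MeasurableSet s → MeasurableSet (f '' s))
    (himage_null : ∀ s, μ s = 0 → μ (f '' s) = 0) {N : Set X} (hN : MeasurableSet N)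
    (hN0 : μ N = 0) : ∃ N', N ⊆ N' ∧ MeasurableSet N' ∧ μ N' = 0 ∧ f ⁻¹' N' = N' := by
  let B : ℕ → Set X := fun n => Nat.rec N (fun _ s => s ∪ f ⁻¹' s ∪ f '' s) n
  have hB : ∀ n, MeasurableSet (B n) ∧ μ (B n) = 0 := by
    intro n
    induction n with
    | zero => exact ⟨hN, hN0⟩
    | succ n ih =>
      exact ⟨(ih.1.union (hf.measurable ih.1)).union (himage _ ih.1),
        measure_union_null (measure_union_null ih.2 (hf.preimage_null ih.2)) (himage_null _ ih.2)⟩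
  refine ⟨⋃ n, B n, subset_iUnion B 0, .iUnion fun n => (hB n).1,
    measure_iUnion_null fun n => (hB n).2, Subset.antisymm ?_ ?_⟩
  · rintro x ⟨-, ⟨n, rfl⟩, hx⟩
    exact mem_iUnion.2 ⟨n + 1, .inl (.inr hx)⟩
  · rintro x ⟨-, ⟨n, rfl⟩, hx⟩
    exact mem_iUnion.2 ⟨n + 1, .inr (mem_image_of_mem f hx)⟩

section SmulSelf

variable {Γ X : Type*} [Group Γ] [MulAction Γ X]

theorem image_smul_self_eq_iUnion (g : X → Γ) (s : Set X) :
    (fun x => g x • x) '' s = ⋃ γ, γ • (s ∩ g ⁻¹' {γ}) := by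
  ext y
  simp only [mem_image, mem_iUnion, mem_smul_set, mem_inter_iff, mem_preimage, mem_singleton_iff]
  exact ⟨fun ⟨x, hx, hy⟩ => ⟨g x, x, ⟨hx, rfl⟩, hy⟩, fun ⟨_, x, ⟨hx, rfl⟩, hy⟩ => ⟨x, hx, hy⟩⟩

theorem preimage_smul_self_subset_iUnion (g : X → Γ) (s : Set X) :
    (fun x => g x • x) ⁻¹' s ⊆ ⋃ γ : Γ, γ⁻¹ • s :=
  fun x hx => mem_iUnion.2 ⟨g x, mem_inv_smul_set_iff.2 hx⟩

variable [MeasurableSpace X] [Countable Γ] {g : X → Γ} {μ : Measure X}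
  [SMulInvariantMeasure Γ X μ]

theorem measure_image_smul_self_eq_zero {s : Set X} (hs : μ s = 0) :
    μ ((fun x => g x • x) '' s) = 0 := by
  rw [image_smul_self_eq_iUnion, measure_iUnion_null_iff]
  exact fun γ => by rw [measure_smul]; exact measure_mono_null inter_subset_left hs

variable [MeasurableSpace Γ] [MeasurableSingletonClass Γ] [MeasurableConstSMul Γ X]

theorem measurable_smul_self (hg : Measurable g) : Measurable fun x => g x • x :=
  measurable_smul_of_countable hg measurable_id

theorem measurableSet_image_smul_self (hg : Measurable g) {s : Set X}
    (hs : MeasurableSet s) : MeasurableSet ((fun x => g x • x) '' s) := by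
  rw [image_smul_self_eq_iUnion]
  exact .iUnion fun γ => (hs.inter (hg (measurableSet_singleton γ))).const_smul γ

theorem quasiMeasurePreserving_smul_self (hg : Measurable g) :
    Measure.QuasiMeasurePreserving (fun x => g x • x) μ μ := by
  refine ⟨measurable_smul_self hg, Measure.AbsolutelyContinuous.mk fun s hs hs0 => ?_⟩
  rw [Measure.map_apply (measurable_smul_self hg) hs]
  refine measure_mono_null (preimage_smul_self_subset_iUnion g s) (measure_iUnion_null fun γ => ?_)
  rwa [measure_smul]

theorem measure_image_smul_self_of_injOn (hg : Measurable g) {s : Set X} (hs : MeasurableSet s)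
    (hinj : InjOn (fun x => g x • x) s) : μ ((fun x => g x • x) '' s) = μ s := by
  have hpieces : ∀ γ, MeasurableSet (s ∩ g ⁻¹' {γ}) :=
    fun γ => hs.inter (hg (measurableSet_singleton γ))
  have hdisj : Pairwise (Disjoint on fun γ : Γ => s ∩ g ⁻¹' {γ}) :=
    fun γ δ hγδ => disjoint_left.2 fun x hx hx' => hγδ (hx.2.symm.trans hx'.2)
  have hdisj_smul : Pairwise (Disjoint on fun γ : Γ => γ • (s ∩ g ⁻¹' {γ})) := by
    refine fun γ δ hγδ => disjoint_left.2 ?_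
    rintro _ ⟨x, ⟨hx, hgx⟩, rfl⟩ ⟨y, ⟨hy, hgy⟩, hxy⟩
    refine hγδ ?_
    rw [mem_preimage, mem_singleton_iff] at hgx hgy
    have : x = y := hinj hx hy (by simp only [hgx, hgy, hxy])
    rw [← hgx, ← hgy, this]
  have hcover : (⋃ γ, s ∩ g ⁻¹' {γ}) = s := by
    rw [← inter_iUnion, ← preimage_iUnion, iUnion_of_singleton, preimage_univ, inter_univ]
  calc μ ((fun x => g x • x) '' s)
      = ∑' γ, μ (γ • (s ∩ g ⁻¹' {γ})) := by
        rw [image_smul_self_eq_iUnion, measure_iUnion hdisj_smul fun γ => (hpieces γ).const_smul γ]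
    _ = ∑' γ, μ (s ∩ g ⁻¹' {γ}) := by simp only [measure_smul]
    _ = μ s := by rw [← measure_iUnion hdisj hpieces, hcover]

theorem measurePreserving_smul_self_of_bijective (hg : Measurable g)
    (hbij : Bijective fun x => g x • x) : MeasurePreserving (fun x => g x • x) μ μ := by
  refine ⟨measurable_smul_self hg, Measure.ext fun s hs => ?_⟩
  have hpre : MeasurableSet ((fun x => g x • x) ⁻¹' s) := measurable_smul_self hg hs
  rw [Measure.map_apply (measurable_smul_self hg) hs,
    ← measure_image_smul_self_of_injOn hg hpre hbij.injective.injOn,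
    image_preimage_eq s hbij.surjective]

variable [IsFiniteMeasure μ]

/-- As `μ` is finite and `f x = g x • x` preserves the measure of sets on which it is injective,
`f '' E` is conull; `G` is the complement of an `f`-invariant null set containing the complement
of `E ∩ f '' E`. -/
theorem exists_bijOn_smul_self_of_injOn (hg : Measurable g) {E : Set X} (hE : ∀ᵐ x ∂μ, x ∈ E)
    (hinj : InjOn (fun x => g x • x) E) :
    ∃ G, MeasurableSet G ∧ (∀ᵐ x ∂μ, x ∈ G) ∧ BijOn (fun x => g x • x) G G := by
  set f : X → X := fun x => g x • x
  obtain ⟨N, hEN, hNm, hN0⟩ := exists_measurable_superset_of_null (ae_iff.1 hE)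
  have hNE : Nᶜ ⊆ E := compl_subset_comm.1 hEN
  have hfN : MeasurableSet (f '' Nᶜ) := measurableSet_image_smul_self hg hNm.compl
  have hfN0 : μ (f '' Nᶜ)ᶜ = 0 := by
    rw [measure_compl hfN (measure_ne_top μ _),
      measure_image_smul_self_of_injOn hg hNm.compl (hinj.mono hNE),
      measure_compl hNm (measure_ne_top μ N), hN0, tsub_zero, tsub_self]
  obtain ⟨B, hB, hBm, hB0, hfB⟩ := exists_null_superset_preimage_eq
    (quasiMeasurePreserving_smul_self hg) (fun _ => measurableSet_image_smul_self hg)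
    (fun _ => measure_image_smul_self_eq_zero) (hNm.union hfN.compl) (measure_union_null hN0 hfN0)
  have hfG : f ⁻¹' Bᶜ = Bᶜ := by rw [preimage_compl, hfB]
  have hGN : Bᶜ ⊆ Nᶜ := compl_subset_compl.2 fun x hx => hB (.inl hx)
  have hGfN : Bᶜ ⊆ f '' Nᶜ := compl_subset_comm.1 fun x hx => hB (.inr hx)
  refine ⟨Bᶜ, hBm.compl, measure_eq_zero_iff_ae_notMem.1 hB0, fun x hx => ?_,
    hinj.mono (hGN.trans hNE), fun y hy => ?_⟩
  · rwa [← hfG] at hx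
  · obtain ⟨x, -, rfl⟩ := hGfN hy
    exact ⟨x, by rw [← hfG]; exact hy, rfl⟩

theorem exists_measurableEquiv_ae_eq_smul_self (hg : Measurable g) {E : Set X}
    (hE : ∀ᵐ x ∂μ, x ∈ E) (hinj : InjOn (fun x => g x • x) E) :
    ∃ J : X ≃ᵐ X, MeasurePreserving J μ μ ∧ J =ᵐ[μ] (fun x => g x • x) ∧
      ∀ x, ∃ γ : Γ, J x = γ • x := by
  classical
  obtain ⟨G, hGm, hG, hbijOn⟩ := exists_bijOn_smul_self_of_injOn hg hE hinj
  set d : X → Γ := G.piecewise g 1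
  have hd : Measurable d := hg.piecewise hGm measurable_const
  have hbij : Bijective fun x => d x • x := by
    convert hbijOn.bijective_piecewise_id using 1
    ext x
    by_cases hx : x ∈ G <;> simp [d, hx]
  refine ⟨{ toEquiv := .ofBijective _ hbij
            measurable_toFun := measurable_smul_self hd
            measurable_invFun := fun s hs => ?_ },
    measurePreserving_smul_self_of_bijective hd hbij, ?_, fun x => ⟨d x, rfl⟩⟩
  · rw [← Equiv.image_eq_preimage_symm]
    exact measurableSet_image_smul_self hd hs
  · filter_upwards [hG] with x hx
    simp [d, hx]

end SmulSelf

theorem cohomologous_to_twisted_factorization_general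
    {X : Type*} [MeasurableSpace X] (μ : Measure X) [IsProbabilityMeasure μ]
    (Γ : Type*) [Group Γ] [Countable Γ] [MeasurableSpace Γ] [MeasurableSingletonClass Γ]
    [MulAction Γ X]
    (hmeas : ∀ γ : Γ, Measurable fun x : X => γ • x)
    (hmp : ∀ γ : Γ, MeasurePreserving (fun x : X => γ • x) μ μ)
    (T : X ≃ᵐ X) (hT : MeasurePreserving T μ μ)
    (α : Γ → X → Γ)
    (hα : ∀ γ : Γ, ∀ᵐ x ∂μ, T (γ • x) = α γ x • T x)
    (τ : Γ ≃* Γ) (ζ : X → Γ) (hζ : Measurable ζ)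
    (hcohom : ∀ γ : Γ, ∀ᵐ x ∂μ, α γ x = (ζ (γ • x))⁻¹ * τ γ * ζ x) :
    MeasurePreserving (fun x => ζ x • (T x)) μ μ ∧
    (∀ γ : Γ, ∀ᵐ x ∂μ, ζ (γ • x) • T (γ • x) = τ γ • (ζ x • T x)) ∧
    (∀ᵐ x ∂μ, ζ ((τ.symm (ζ x))⁻¹ • x) • T ((τ.symm (ζ x))⁻¹ • x) = T x) ∧
    (∃ J : X ≃ᵐ X, MeasurePreserving J μ μ ∧ (∀ᵐ x ∂μ, J x = (τ.symm (ζ x))⁻¹ • x) ∧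
      ∀ᵐ x ∂μ, ∃ γ : Γ, J x = γ • x) := by
  have : MeasurableConstSMul Γ X := ⟨hmeas⟩
  have : SMulInvariantMeasure Γ X μ :=
    ⟨fun γ _ hs => (hmp γ).measure_preimage hs.nullMeasurableSet⟩
  set A : X → X := fun x => ζ x • T x
  have hequivariant : ∀ γ : Γ, ∀ᵐ x ∂μ, A (γ • x) = τ γ • A x := fun γ => by
    filter_upwards [hα γ, hcohom γ] with x hαx hcohomx
    simp only [A, hαx, hcohomx, smul_smul, mul_assoc, mul_inv_cancel_left]
  have hfactor : ∀ᵐ x ∂μ, A ((τ.symm (ζ x))⁻¹ • x) = T x := by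
    filter_upwards [ae_all_iff.2 hequivariant] with x hx
    rw [hx, map_inv, MulEquiv.apply_symm_apply, inv_smul_smul]
  have hinj : InjOn (fun x => (τ.symm (ζ x))⁻¹ • x) {x | A ((τ.symm (ζ x))⁻¹ • x) = T x} :=
    fun x (hx : A _ = T x) y (hy : A _ = T y) hxy =>
      T.injective (hx.symm.trans ((congrArg A hxy).trans hy))
  obtain ⟨J, hJ, hJζ, hJorbit⟩ :=
    exists_measurableEquiv_ae_eq_smul_self (g := fun x => (τ.symm (ζ x))⁻¹)
      ((measurable_of_countable fun γ => (τ.symm γ)⁻¹).comp hζ) hfactor hinj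
  have hAJ : T =ᵐ[μ] A ∘ J := by
    filter_upwards [hJζ, hfactor] with x hJx hx
    rw [comp_apply, hJx, hx]
  have hA : MeasurePreserving A μ μ := (hJ.comp_right_iff).1 <|
    hT.congr ((measurable_smul_of_countable hζ T.measurable).comp J.measurable) hAJ
  exact ⟨hA, hequivariant, hfactor, J, hJ, hJζ, .of_forall hJorbit⟩

/-- If the rearrangement cocycle of `T` is cohomologous to `c_τ`, i.e.
`α_T γ x = (ζ (γ • x))⁻¹ * τ γ * ζ x`, then `A x := ζ x • T x` is a measure-preserving
automorphism with `A (γ • x) = τ γ • A x`, and `T = A ∘ J` where `J x = (ξ x)⁻¹ • x`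
(with `ξ x = τ⁻¹ (ζ x)`) is an inner automorphism of the orbit relation. -/
theorem cohomologous_to_twisted_factorization
    {X : Type*} [MeasurableSpace X] (μ : Measure X) [IsProbabilityMeasure μ]
    (Γ : Type*) [Group Γ] [Countable Γ] [MeasurableSpace Γ] [MeasurableSingletonClass Γ]
    [MulAction Γ X]
    (hmeas : ∀ γ : Γ, Measurable fun x : X => γ • x)
    (hmp : ∀ γ : Γ, MeasurePreserving (fun x : X => γ • x) μ μ)
    (hfree : ∀ᵐ x ∂μ, ∀ γ : Γ, γ • x = x → γ = 1)
    (herg : ∀ A : Set X, MeasurableSet A → (∀ γ : Γ, (fun x : X => γ • x) ⁻¹' A = A) →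
      μ A = 0 ∨ μ A = 1)
    (T : X ≃ᵐ X) (hT : MeasurePreserving T μ μ)
    (α : Γ → X → Γ)
    (hα : ∀ γ : Γ, ∀ᵐ x ∂μ, T (γ • x) = α γ x • T x)
    (τ : Γ ≃* Γ) (ζ : X → Γ) (hζ : Measurable ζ)
    (hcohom : ∀ γ : Γ, ∀ᵐ x ∂μ, α γ x = (ζ (γ • x))⁻¹ * τ γ * ζ x) :
    MeasurePreserving (fun x => ζ x • (T x)) μ μ ∧
    (∀ γ : Γ, ∀ᵐ x ∂μ, ζ (γ • x) • T (γ • x) = τ γ • (ζ x • T x)) ∧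
    (∀ᵐ x ∂μ, ζ ((τ.symm (ζ x))⁻¹ • x) • T ((τ.symm (ζ x))⁻¹ • x) = T x) ∧
    (∃ J : X ≃ᵐ X, MeasurePreserving J μ μ ∧ (∀ᵐ x ∂μ, J x = (τ.symm (ζ x))⁻¹ • x) ∧
      ∀ᵐ x ∂μ, ∃ γ : Γ, J x = γ • x) :=
  cohomologous_to_twisted_factorization_general μ Γ hmeas hmp T hT α hα τ ζ hζ hcohom
end

section
/- Let (Ω,m) be a measure space with two commuting, free, measure-preserving actions of a countable group Γ (written from the left and from the right), each admitting a finite-measure fundamental domain, and assume the Γ×Γ-action on (Ω,m) is ergodic. If X ⊂ Ω is a fundamental domain for the right action and Y ⊂ Ω is a fundamental domain for the left action with m(X) = m(Y), then there exists a subset Z ⊂ Ω that is simultaneously a fundamental domain for both the left and the right Γ-action. -/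
/-!
Call a measurable set wandering for an action if almost every orbit meets it at most once.
Exchanging the sums over the group shows that a wandering set `W` has the measure of the part
of a fundamental domain `X` it saturates; in particular `m W ≤ m X`, with equality exactly when
`W` is itself a fundamental domain.

Sets wandering for both actions can be enlarged by any such set lying outside both of their
saturations, and a positive-measure one exists inside every set of positive measure (in each
orbit, take the first point in an enumeration of the group). A greedy exhaustion, bounded by
`m X`, gives a set `Z` wandering for both actions whose two saturations cover almost everything.
By ergodicity one saturation is conull, so `Z` is a fundamental domain for that action; hence
`m Z = m X = m Y`, and by the equality case `Z` is a fundamental domain for the other one too.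
-/

open MeasureTheory Set

def IsFundDom {Ω Γ : Type*} [MeasurableSpace Ω] (m : Measure Ω)
    (a : Γ → Ω → Ω) (D : Set Ω) : Prop :=
  MeasurableSet D ∧ ∀ᵐ ω ∂m, ∃! γ : Γ, a γ ω ∈ D

open scoped ENNReal

lemma ENNReal.exists_forall_le_two_mul {ι : Type*} {s : Set ι} (hs : s.Nonempty)
    {f : ι → ℝ≥0∞} {B : ℝ≥0∞} (hB : B ≠ ∞) (hfB : ∀ i ∈ s, f i ≤ B) :
    ∃ i ∈ s, ∀ j ∈ s, f j ≤ 2 * f i := by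
  set S := ⨆ j ∈ s, f j
  have hfS : ∀ j ∈ s, f j ≤ S := fun j hj => le_iSup₂ (f := fun j _ => f j) j hj
  rcases eq_or_ne S 0 with hS0 | hS0
  · obtain ⟨i, hi⟩ := hs
    exact ⟨i, hi, fun j hj => by simp [le_zero_iff.1 (hS0 ▸ hfS j hj)]⟩
  · have hlt : S / 2 < S := ENNReal.half_lt_self hS0 (ne_top_of_le_ne_top hB (iSup₂_le hfB))
    obtain ⟨i, hi, hSi⟩ : ∃ i ∈ s, S / 2 < f i := by simpa [S, lt_iSup_iff] using hlt
    refine ⟨i, hi, fun j hj => ?_⟩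
    calc f j ≤ S := hfS j hj
      _ = 2 * (S / 2) := (ENNReal.mul_div_cancel two_ne_zero ENNReal.ofNat_ne_top).symm
      _ ≤ 2 * f i := by gcongr

theorem exists_maximal_up_to_null {Ω : Type*} [MeasurableSpace Ω] {m : Measure Ω}
    {P : Set Ω → Prop} {A : Set Ω → Set Ω} {B : ℝ≥0∞}
    (hB : B ≠ ∞) (hP_empty : P ∅) (hP_union : ∀ W V, P W → P V → V ⊆ A W → P (W ∪ V))
    (hP_iUnion : ∀ s : ℕ → Set Ω, Monotone s → (∀ n, P (s n)) → P (⋃ n, s n))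
    (hA : Antitone A) (hA_disjoint : ∀ W, Disjoint W (A W))
    (hP_meas : ∀ W, P W → MeasurableSet W) (hP_le : ∀ W, P W → m W ≤ B) :
    ∃ Z, P Z ∧ ∀ V, P V → V ⊆ A Z → m V = 0 := by
  -- Greedily add an augmentation of at least half the largest possible measure.
  have hgreedy : ∀ W, ∃ V, P W →
      P V ∧ V ⊆ A W ∧ ∀ V', P V' → V' ⊆ A W → m V' ≤ 2 * m V := by
    intro W
    by_cases hW : P W
    · obtain ⟨V, hV, hVmax⟩ := ENNReal.exists_forall_le_two_mul (s := {V | P V ∧ V ⊆ A W})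
        ⟨∅, hP_empty, empty_subset _⟩ hB fun V hV => hP_le V hV.1
      exact ⟨V, fun _ => ⟨hV.1, hV.2, fun V' h₁ h₂ => hVmax V' ⟨h₁, h₂⟩⟩⟩
    · exact ⟨∅, fun h => absurd h hW⟩
  choose aug haug using hgreedy
  let s : ℕ → Set Ω := fun n => Nat.rec ∅ (fun _ W => W ∪ aug W) n
  have hPs : ∀ n, P (s n) := by
    intro n
    induction n with
    | zero => exact hP_empty
    | succ n ih => exact hP_union _ _ ih (haug _ ih).1 (haug _ ih).2.1
  have hs : Monotone s := monotone_nat_of_le_succ fun n => subset_union_left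
  refine ⟨⋃ n, s n, hP_iUnion s hs hPs, fun V hV hVA => ?_⟩
  have hgrow : ∀ n : ℕ, n * m V ≤ 2 * m (s n) := by
    intro n
    induction n with
    | zero => simp
    | succ n ih =>
      have hstep : m V ≤ 2 * m (aug (s n)) :=
        (haug _ (hPs n)).2.2 V hV (hVA.trans (hA (subset_iUnion s n)))
      calc ((n + 1 : ℕ) : ℝ≥0∞) * m V = n * m V + m V := by push_cast; ring
        _ ≤ 2 * m (s n) + 2 * m (aug (s n)) := add_le_add ih hstep
        _ = 2 * m (s (n + 1)) := by
          rw [← mul_add, ← measure_union ((hA_disjoint _).mono_right (haug _ (hPs n)).2.1)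
            (hP_meas _ (haug _ (hPs n)).1)]
  by_contra hV0
  obtain ⟨n, hn⟩ :=
    ENNReal.exists_nat_mul_gt hV0 (ENNReal.mul_ne_top (ENNReal.ofNat_ne_top (n := 2)) hB)
  exact (hn.trans_le ((hgrow n).trans (by gcongr; exact hP_le _ (hPs n)))).false

section Saturation

variable (G : Type*) {Ω : Type*} [Group G] [MulAction G Ω]

def saturation (W : Set Ω) : Set Ω := ⋃ g : G, (g • ·) ⁻¹' W

variable {G}

@[simp]
lemma mem_saturation {W : Set Ω} {ω : Ω} : ω ∈ saturation G W ↔ ∃ g : G, g • ω ∈ W := by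
  simp [saturation]

lemma subset_saturation (W : Set Ω) : W ⊆ saturation G W :=
  fun ω hω => mem_saturation.2 ⟨1, by rwa [one_smul]⟩

lemma saturation_mono {W W' : Set Ω} (h : W ⊆ W') : saturation G W ⊆ saturation G W' :=
  iUnion_mono fun _ => preimage_mono h

@[simp]
lemma smul_mem_saturation_iff {W : Set Ω} (g : G) {ω : Ω} :
    g • ω ∈ saturation G W ↔ ω ∈ saturation G W := by
  simp only [mem_saturation, smul_smul]
  exact ⟨fun ⟨h, hh⟩ => ⟨h * g, hh⟩, fun ⟨h, hh⟩ => ⟨h * g⁻¹, by rwa [inv_mul_cancel_right]⟩⟩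

lemma smul_mem_saturation_of_smul_mem {W : Set Ω} {g : G} {ω : Ω} (g' : G) (h : g • ω ∈ W) :
    g' • ω ∈ saturation G W :=
  (smul_mem_saturation_iff g').2 <| (smul_mem_saturation_iff g).1 (subset_saturation W h)

lemma preimage_smul_saturation (W : Set Ω) (g : G) :
    (g • ·) ⁻¹' saturation G W = saturation G W :=
  ext fun _ => smul_mem_saturation_iff g

lemma preimage_smul_saturation_of_comm {H : Type*} [SMul H Ω] [SMulCommClass G H Ω]
    {S : Set Ω} (h : H) (hS : (h • ·) ⁻¹' S = S) :
    (h • ·) ⁻¹' saturation G S = saturation G S := by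
  ext ω
  simp only [mem_preimage, mem_saturation, smul_comm _ h]
  exact exists_congr fun g => Set.ext_iff.1 hS (g • ω)

variable [MeasurableSpace Ω] [Countable G]

lemma measurableSet_saturation [MeasurableConstSMul G Ω] {W : Set Ω} (hW : MeasurableSet W) :
    MeasurableSet (saturation G W) :=
  MeasurableSet.iUnion fun g => measurable_const_smul g hW

lemma measure_saturation_eq_zero {m : Measure Ω} [SMulInvariantMeasure G Ω m] {W : Set Ω}
    (hW : m W = 0) : m (saturation G W) = 0 :=
  measure_iUnion_null fun g => measure_preimage_smul_null hW g

end Saturation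

def IsWandering {Ω : Type*} [MeasurableSpace Ω] (m : Measure Ω) (G : Type*) [SMul G Ω]
    (W : Set Ω) : Prop :=
  MeasurableSet W ∧ ∀ᵐ ω ∂m, ∀ g g' : G, g • ω ∈ W → g' • ω ∈ W → g = g'

section Wandering

variable {G Ω : Type*} [Group G] [MulAction G Ω] [MeasurableSpace Ω] {m : Measure Ω}

lemma isWandering_empty : IsWandering m G (∅ : Set Ω) :=
  ⟨MeasurableSet.empty, ae_of_all _ fun _ _ _ h => absurd h (notMem_empty _)⟩

lemma IsWandering.mono {W V : Set Ω} (hW : IsWandering m G W) (hV : MeasurableSet V)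
    (hVW : V ⊆ W) : IsWandering m G V :=
  ⟨hV, hW.2.mono fun _ h g g' hg hg' => h g g' (hVW hg) (hVW hg')⟩

lemma IsWandering.union {W V : Set Ω} (hW : IsWandering m G W) (hV : IsWandering m G V)
    (hVW : V ⊆ (saturation G W)ᶜ) : IsWandering m G (W ∪ V) := by
  refine ⟨hW.1.union hV.1, ?_⟩
  filter_upwards [hW.2, hV.2] with ω hWω hVω
  have hmixed : ∀ g g' : G, g • ω ∈ W → g' • ω ∉ V := fun g g' hg hg' =>
    hVW hg' (smul_mem_saturation_of_smul_mem g' hg)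
  rintro g g' (hg | hg) (hg' | hg')
  exacts [hWω g g' hg hg', (hmixed g g' hg hg').elim, (hmixed g' g hg' hg).elim, hVω g g' hg hg']

lemma IsWandering.iUnion_of_monotone {s : ℕ → Set Ω} (hs : Monotone s)
    (h : ∀ n, IsWandering m G (s n)) : IsWandering m G (⋃ n, s n) := by
  refine ⟨MeasurableSet.iUnion fun n => (h n).1, ?_⟩
  filter_upwards [ae_all_iff.2 fun n => (h n).2] with ω hω
  simp only [mem_iUnion]
  rintro g g' ⟨i, hi⟩ ⟨j, hj⟩
  exact hω (max i j) g g' (hs (le_max_left i j) hi) (hs (le_max_right i j) hj)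

lemma IsWandering.preimage_smul [MeasurableConstSMul G Ω] {W : Set Ω} (hW : IsWandering m G W)
    (g : G) : IsWandering m G ((g • ·) ⁻¹' W) := by
  refine ⟨measurable_const_smul g hW.1, hW.2.mono fun ω h h₁ h₂ hh₁ hh₂ => ?_⟩
  simp only [mem_preimage, smul_smul] at hh₁ hh₂
  exact mul_left_cancel (h _ _ hh₁ hh₂)

lemma isFundDom_iff {D : Set Ω} :
    IsFundDom m (· • · : G → Ω → Ω) D ↔
      IsWandering m G D ∧ ∀ᵐ ω ∂m, ω ∈ saturation G D := by
  rw [IsFundDom, IsWandering, and_assoc, ← Filter.eventually_and]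
  refine and_congr_right' (Filter.eventually_congr (ae_of_all _ fun ω => ?_))
  rw [mem_saturation]
  exact ⟨fun h => ⟨fun g g' hg hg' => h.unique hg hg', h.exists⟩,
    fun h => existsUnique_of_exists_of_unique h.2 fun g g' hg hg' => h.1 g g' hg hg'⟩

lemma IsFundDom.isWandering {D : Set Ω} (hD : IsFundDom m (· • · : G → Ω → Ω) D) :
    IsWandering m G D :=
  (isFundDom_iff.1 hD).1

lemma IsFundDom.ae_mem_saturation {D : Set Ω} (hD : IsFundDom m (· • · : G → Ω → Ω) D) :
    ∀ᵐ ω ∂m, ω ∈ saturation G D :=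
  (isFundDom_iff.1 hD).2

end Wandering

lemma isFundDom_comp_equiv_iff {Ω G G' : Type*} [MeasurableSpace Ω] {m : Measure Ω}
    (e : G' ≃ G) (a : G → Ω → Ω) {D : Set Ω} : IsFundDom m (a ∘ e) D ↔ IsFundDom m a D :=
  and_congr_right' (Filter.eventually_congr (ae_of_all _ fun ω =>
    e.existsUnique_congr_right (q := fun g => a g ω ∈ D)))

section Counting

variable {G Ω : Type*} [Group G] [MulAction G Ω] [Countable G] [MeasurableSpace Ω]
  [MeasurableConstSMul G Ω] {m : Measure Ω}

lemma IsWandering.measure_inter_saturation {W : Set Ω} (hW : IsWandering m G W) {S : Set Ω}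
    (hS : MeasurableSet S) : m (S ∩ saturation G W) = ∑' g : G, m (S ∩ (g • ·) ⁻¹' W) := by
  rw [saturation, inter_iUnion]
  refine measure_iUnion₀ (fun g g' hne => ?_) fun g =>
    (hS.inter (measurable_const_smul g hW.1)).nullMeasurableSet
  refine measure_mono_null ?_ (ae_iff.1 hW.2)
  exact fun ω hω hω' => hne (hω' g g' hω.1.2 hω.2.2)

variable [SMulInvariantMeasure G Ω m]

lemma IsFundDom.measure_eq_inter_saturation {X W : Set Ω}
    (hX : IsFundDom m (· • · : G → Ω → Ω) X) (hW : IsWandering m G W) :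
    m W = m (X ∩ saturation G W) := by
  have hswap : ∀ g : G, m (W ∩ (g • ·) ⁻¹' X) = m (X ∩ (g⁻¹ • ·) ⁻¹' W) := fun g => by
    rw [← measure_preimage_smul m g⁻¹, inter_comm]
    congr 1
    ext ω
    simp [smul_smul]
  calc m W = m (W ∩ saturation G X) := (measure_inter_conull hX.ae_mem_saturation).symm
    _ = ∑' g : G, m (X ∩ (g⁻¹ • ·) ⁻¹' W) := by
      rw [hX.isWandering.measure_inter_saturation hW.1]
      exact tsum_congr hswap
    _ = ∑' g : G, m (X ∩ (g • ·) ⁻¹' W) := (Equiv.inv G).tsum_eq fun g => m (X ∩ (g • ·) ⁻¹' W)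
    _ = m (X ∩ saturation G W) := (hW.measure_inter_saturation hX.1).symm

lemma IsFundDom.measure_le {X W : Set Ω} (hX : IsFundDom m (· • · : G → Ω → Ω) X)
    (hW : IsWandering m G W) : m W ≤ m X :=
  (hX.measure_eq_inter_saturation hW).trans_le (measure_mono inter_subset_left)

lemma IsFundDom.measure_eq {X W : Set Ω} (hX : IsFundDom m (· • · : G → Ω → Ω) X)
    (hW : IsFundDom m (· • · : G → Ω → Ω) W) : m W = m X :=
  (hX.measure_eq_inter_saturation hW.isWandering).trans
    (measure_inter_conull hW.ae_mem_saturation)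

lemma IsFundDom.of_measure_eq {X W : Set Ω} (hX : IsFundDom m (· • · : G → Ω → Ω) X)
    (hXfin : m X ≠ ∞) (hW : IsWandering m G W) (hWX : m W = m X) :
    IsFundDom m (· • · : G → Ω → Ω) W := by
  have hXW : m (X \ saturation G W) = 0 := by
    rw [← sdiff_self_inter, measure_sdiff inter_subset_left
      ((hX.1.inter (measurableSet_saturation hW.1)).nullMeasurableSet)
      (ne_top_of_le_ne_top hXfin (measure_mono inter_subset_left)),
      ← hX.measure_eq_inter_saturation hW, hWX, tsub_self]
  refine isFundDom_iff.2 ⟨hW, ?_⟩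
  filter_upwards [hX.ae_mem_saturation,
    measure_eq_zero_iff_ae_notMem.1 (measure_saturation_eq_zero (G := G) hXW)] with ω hωX hω
  obtain ⟨g, hg⟩ := mem_saturation.1 hωX
  by_contra hωW
  exact hω (mem_saturation.2 ⟨g, hg, (smul_mem_saturation_iff g).not.2 hωW⟩)

end Counting

section Selection

variable {G Ω : Type*} [Group G] [MulAction G Ω] [Countable G] [MeasurableSpace Ω]
  [MeasurableConstSMul G Ω] {m : Measure Ω}

/-- Keep from each `P n` only the orbits not already met by an earlier `P k`. -/
lemma exists_isWandering_subset_iUnion (P : ℕ → Set Ω) (hP : ∀ n, IsWandering m G (P n)) :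
    ∃ V ⊆ ⋃ n, P n, IsWandering m G V ∧ ⋃ n, P n ⊆ saturation G V := by
  refine ⟨⋃ n, P n \ ⋃ k < n, saturation G (P k), iUnion_mono fun n => sdiff_subset, ?_, ?_⟩
  · refine ⟨MeasurableSet.iUnion fun n => (hP n).1.diff <| MeasurableSet.iUnion fun k =>
      MeasurableSet.iUnion fun _ => measurableSet_saturation (hP k).1, ?_⟩
    filter_upwards [ae_all_iff.2 fun n => (hP n).2] with ω hω
    simp only [mem_iUnion, mem_sdiff, not_exists]
    rintro g g' ⟨n, hn, hn_min⟩ ⟨k, hk, hk_min⟩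
    obtain rfl : n = k :=
      le_antisymm (not_lt.1 fun h => hn_min k h (smul_mem_saturation_of_smul_mem g hk))
        (not_lt.1 fun h => hk_min n h (smul_mem_saturation_of_smul_mem g' hn))
    exact hω n g g' hn hk
  · classical
    intro ω hω
    have hex : ∃ n, ω ∈ saturation G (P n) :=
      (mem_iUnion.1 hω).imp fun n hn => subset_saturation _ hn
    obtain ⟨g, hg⟩ := mem_saturation.1 (Nat.find_spec hex)
    refine mem_saturation.2 ⟨g, mem_iUnion.2 ⟨Nat.find hex, hg, ?_⟩⟩
    simp only [mem_iUnion, not_exists]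
    exact fun k hk hgk => Nat.find_min hex hk ((smul_mem_saturation_iff g).1 hgk)

variable [SMulInvariantMeasure G Ω m]

lemma IsFundDom.exists_isWandering_subset {X V : Set Ω}
    (hX : IsFundDom m (· • · : G → Ω → Ω) X) (hV : MeasurableSet V) (hV0 : m V ≠ 0) :
    ∃ V' ⊆ V, IsWandering m G V' ∧ m V' ≠ 0 := by
  obtain ⟨e, he⟩ := exists_surjective_nat G
  obtain ⟨V', hV'sub, hV', hV'sat⟩ := exists_isWandering_subset_iUnion
    (fun n => V ∩ (e n • ·) ⁻¹' X) fun n =>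
      (hX.isWandering.preimage_smul (e n)).mono (hV.inter (measurable_const_smul _ hX.1))
        inter_subset_right
  refine ⟨V', hV'sub.trans (iUnion_subset fun _ => inter_subset_left), hV', fun hV'0 => hV0 ?_⟩
  have hcover : V ∩ saturation G X ⊆ saturation G V' := fun ω ⟨hωV, hωX⟩ => by
    obtain ⟨g, hg⟩ := mem_saturation.1 hωX
    obtain ⟨n, rfl⟩ := he g
    exact hV'sat (mem_iUnion.2 ⟨n, hωV, hg⟩)
  rw [← measure_inter_conull hX.ae_mem_saturation]
  exact measure_mono_null hcover (measure_saturation_eq_zero hV'0)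

end Selection

section TwoActions

variable {G H Ω : Type*} [Group G] [Group H] [MulAction G Ω] [MulAction H Ω]
  [Countable G] [Countable H] [MeasurableSpace Ω] [MeasurableConstSMul G Ω]
  [MeasurableConstSMul H Ω] {m : Measure Ω} [SMulInvariantMeasure G Ω m]

/-- The set of points whose `H`-orbit misses `W`, saturated under `G`, is invariant under both
actions; ergodicity makes it null or conull. -/
lemma ae_mem_saturation_or_ae_mem_saturation [SMulCommClass G H Ω]
    (herg : ∀ A : Set Ω, MeasurableSet A → (∀ g : G, (g • ·) ⁻¹' A = A) →
      (∀ h : H, (h • ·) ⁻¹' A = A) → m A = 0 ∨ m Aᶜ = 0)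
    {W : Set Ω} (hW : MeasurableSet W) (hC : m (saturation G W ∪ saturation H W)ᶜ = 0) :
    (∀ᵐ ω ∂m, ω ∈ saturation G W) ∨ ∀ᵐ ω ∂m, ω ∈ saturation H W := by
  set D := saturation G (saturation H W)ᶜ
  have hD_inv : ∀ h : H, (h • ·) ⁻¹' D = D := fun h =>
    preimage_smul_saturation_of_comm h (by rw [preimage_compl, preimage_smul_saturation])
  rcases herg D (measurableSet_saturation (measurableSet_saturation hW).compl)
    (preimage_smul_saturation _) hD_inv with hD0 | hDc0
  · exact Or.inr (measure_mono_null (subset_saturation _) hD0)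
  · refine Or.inl (measure_mono_null (t := Dᶜ ∪ saturation G (saturation G W ∪ saturation H W)ᶜ)
      (fun ω hωG => ?_) (measure_union_null hDc0 (measure_saturation_eq_zero hC)))
    by_cases hωD : ω ∈ D
    · obtain ⟨g, hg⟩ := mem_saturation.1 hωD
      refine Or.inr (mem_saturation.2 ⟨g, ?_⟩)
      rw [compl_union]
      exact ⟨(smul_mem_saturation_iff g).not.2 hωG, hg⟩
    · exact Or.inl hωD

variable [SMulInvariantMeasure H Ω m]

lemma exists_isWandering_isWandering_subset {X Y C : Set Ω}
    (hX : IsFundDom m (· • · : H → Ω → Ω) X) (hY : IsFundDom m (· • · : G → Ω → Ω) Y)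
    (hC : MeasurableSet C) (hC0 : m C ≠ 0) :
    ∃ V ⊆ C, IsWandering m G V ∧ IsWandering m H V ∧ m V ≠ 0 := by
  obtain ⟨V₁, hV₁C, hV₁, hV₁0⟩ := hX.exists_isWandering_subset hC hC0
  obtain ⟨V₂, hV₂V₁, hV₂, hV₂0⟩ := hY.exists_isWandering_subset hV₁.1 hV₁0
  exact ⟨V₂, hV₂V₁.trans hV₁C, hV₂, hV₁.mono hV₂.1 hV₂V₁, hV₂0⟩

lemma exists_isWandering_isWandering_compl_saturation_null {X Y : Set Ω}
    (hX : IsFundDom m (· • · : H → Ω → Ω) X) (hXfin : m X ≠ ∞)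
    (hY : IsFundDom m (· • · : G → Ω → Ω) Y) :
    ∃ Z, IsWandering m G Z ∧ IsWandering m H Z ∧ m (saturation G Z ∪ saturation H Z)ᶜ = 0 := by
  obtain ⟨Z, ⟨hZG, hZH⟩, hZmax⟩ := exists_maximal_up_to_null (m := m)
    (P := fun W => IsWandering m G W ∧ IsWandering m H W)
    (A := fun W => (saturation G W ∪ saturation H W)ᶜ) hXfin
    ⟨isWandering_empty, isWandering_empty⟩
    (fun W V hW hV hVW => by
      rw [compl_union] at hVW
      exact ⟨hW.1.union hV.1 (hVW.trans inter_subset_left),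
        hW.2.union hV.2 (hVW.trans inter_subset_right)⟩)
    (fun s hs h =>
      ⟨.iUnion_of_monotone hs fun n => (h n).1, .iUnion_of_monotone hs fun n => (h n).2⟩)
    (fun W W' hWW' => compl_subset_compl.2 (union_subset_union (saturation_mono hWW')
      (saturation_mono hWW')))
    (fun W => disjoint_compl_right_iff_subset.2 ((subset_saturation W).trans subset_union_left))
    (fun W hW => hW.1.1) (fun W hW => hX.measure_le hW.2)
  refine ⟨Z, hZG, hZH, ?_⟩
  by_contra hC
  obtain ⟨V, hVC, hVG, hVH, hV0⟩ := exists_isWandering_isWandering_subset hX hY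
    ((measurableSet_saturation hZG.1).union (measurableSet_saturation hZG.1)).compl hC
  exact hV0 (hZmax V ⟨hVG, hVH⟩ hVC)

theorem exists_common_isFundDom [SMulCommClass G H Ω]
    (herg : ∀ A : Set Ω, MeasurableSet A → (∀ g : G, (g • ·) ⁻¹' A = A) →
      (∀ h : H, (h • ·) ⁻¹' A = A) → m A = 0 ∨ m Aᶜ = 0)
    {X Y : Set Ω} (hX : IsFundDom m (· • · : H → Ω → Ω) X) (hXfin : m X ≠ ∞)
    (hY : IsFundDom m (· • · : G → Ω → Ω) Y) (hXY : m X = m Y) :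
    ∃ Z, IsFundDom m (· • · : G → Ω → Ω) Z ∧ IsFundDom m (· • · : H → Ω → Ω) Z := by
  obtain ⟨Z, hZG, hZH, hZC⟩ := exists_isWandering_isWandering_compl_saturation_null hX hXfin hY
  rcases ae_mem_saturation_or_ae_mem_saturation herg hZG.1 hZC with hsat | hsat
  · have hZ : IsFundDom m (· • · : G → Ω → Ω) Z := isFundDom_iff.2 ⟨hZG, hsat⟩
    exact ⟨Z, hZ, hX.of_measure_eq hXfin hZH ((hY.measure_eq hZ).trans hXY.symm)⟩
  · have hZ : IsFundDom m (· • · : H → Ω → Ω) Z := isFundDom_iff.2 ⟨hZH, hsat⟩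
    exact ⟨Z, hY.of_measure_eq (hXY ▸ hXfin) hZG ((hX.measure_eq hZ).trans hXY), hZ⟩

end TwoActions

theorem exists_two_sided_fundamental_domain_general
    {Ω : Type*} [MeasurableSpace Ω] (m : Measure Ω)
    (Γ : Type*) [Group Γ] [Countable Γ]
    (l r : Γ → Ω → Ω)
    (hlmeas : ∀ γ, Measurable (l γ)) (hrmeas : ∀ γ, Measurable (r γ))
    (hl1 : l 1 = id) (hr1 : r 1 = id)
    (hlact : ∀ γ₁ γ₂ ω, l γ₁ (l γ₂ ω) = l (γ₁ * γ₂) ω)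
    (hract : ∀ γ₁ γ₂ ω, r γ₁ (r γ₂ ω) = r (γ₂ * γ₁) ω)
    (hcomm : ∀ γ δ ω, l γ (r δ ω) = r δ (l γ ω))
    (hlmp : ∀ γ, MeasurePreserving (l γ) m m)
    (hrmp : ∀ γ, MeasurePreserving (r γ) m m)
    (herg : ∀ A : Set Ω, MeasurableSet A → (∀ γ, l γ ⁻¹' A = A) → (∀ γ, r γ ⁻¹' A = A) →
      m A = 0 ∨ m Aᶜ = 0)
    (X Y : Set Ω)
    (hX : IsFundDom m r X) (hXfin : m X < ⊤)
    (hY : IsFundDom m l Y)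
    (hXY : m X = m Y) :
    ∃ Z : Set Ω, IsFundDom m l Z ∧ IsFundDom m r Z := by
  -- `l` is a left action of `Γ`, and `r` a left action of `Γᵐᵒᵖ`.
  let _ : MulAction Γ Ω :=
    { smul := l, one_smul := congrFun hl1, mul_smul := fun g h ω => (hlact g h ω).symm }
  let _ : MulAction Γᵐᵒᵖ Ω :=
    { smul := fun g => r g.unop, one_smul := congrFun hr1
      mul_smul := fun g h ω => (hract g.unop h.unop ω).symm }
  have _ : Countable Γᵐᵒᵖ := MulOpposite.opEquiv.symm.injective.countable
  have _ : SMulCommClass Γ Γᵐᵒᵖ Ω := ⟨fun g h ω => hcomm g h.unop ω⟩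
  have _ : MeasurableConstSMul Γ Ω := ⟨hlmeas⟩
  have _ : MeasurableConstSMul Γᵐᵒᵖ Ω := ⟨fun g => hrmeas g.unop⟩
  have _ : SMulInvariantMeasure Γ Ω m :=
    ⟨fun g _ hs => (hlmp g).measure_preimage hs.nullMeasurableSet⟩
  have _ : SMulInvariantMeasure Γᵐᵒᵖ Ω m :=
    ⟨fun g _ hs => (hrmp g.unop).measure_preimage hs.nullMeasurableSet⟩
  have hr_fd : ∀ {D}, IsFundDom m (· • · : Γᵐᵒᵖ → Ω → Ω) D ↔ IsFundDom m r D :=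
    isFundDom_comp_equiv_iff MulOpposite.opEquiv.symm r
  obtain ⟨Z, hZl, hZr⟩ := exists_common_isFundDom
    (fun A hA hl hr => herg A hA hl fun γ => hr (MulOpposite.op γ)) (hr_fd.2 hX) hXfin.ne hY hXY
  exact ⟨Z, hZl, hr_fd.1 hZr⟩

/-- In an ergodic self measure-equivalence coupling `(Ω, m)` of a countable
group `Γ` (two commuting free m.p. actions, each with a finite-measure fundamental domain),
if a fundamental domain `X` for the right action and a fundamental domain `Y` for the left
action satisfy `m X = m Y`, then there is a common (two-sided) fundamental domain `Z`. -/
theorem exists_two_sided_fundamental_domain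
    {Ω : Type*} [MeasurableSpace Ω] (m : Measure Ω) [SigmaFinite m]
    (Γ : Type*) [Group Γ] [Countable Γ]
    (l r : Γ → Ω → Ω)
    (hlmeas : ∀ γ, Measurable (l γ)) (hrmeas : ∀ γ, Measurable (r γ))
    (hl1 : l 1 = id) (hr1 : r 1 = id)
    (hlact : ∀ γ₁ γ₂ ω, l γ₁ (l γ₂ ω) = l (γ₁ * γ₂) ω)
    (hract : ∀ γ₁ γ₂ ω, r γ₁ (r γ₂ ω) = r (γ₂ * γ₁) ω)
    (hcomm : ∀ γ δ ω, l γ (r δ ω) = r δ (l γ ω))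
    (hlmp : ∀ γ, MeasurePreserving (l γ) m m)
    (hrmp : ∀ γ, MeasurePreserving (r γ) m m)
    (hlfree : ∀ᵐ ω ∂m, ∀ γ, l γ ω = ω → γ = 1)
    (hrfree : ∀ᵐ ω ∂m, ∀ γ, r γ ω = ω → γ = 1)
    (herg : ∀ A : Set Ω, MeasurableSet A → (∀ γ, l γ ⁻¹' A = A) → (∀ γ, r γ ⁻¹' A = A) →
      m A = 0 ∨ m Aᶜ = 0)
    (X Y : Set Ω)
    (hX : IsFundDom m r X) (hXfin : m X < ⊤)
    (hY : IsFundDom m l Y) (hYfin : m Y < ⊤)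
    (hXY : m X = m Y) :
    ∃ Z : Set Ω, IsFundDom m l Z ∧ IsFundDom m r Z :=
  exists_two_sided_fundamental_domain_general m Γ l r hlmeas hrmeas hl1 hr1 hlact hract hcomm hlmp
    hrmp herg X Y hX hXfin hY hXY
end

section
/- Let Γ act freely and measure-preservingly on (X,μ), T an automorphism of the orbit relation with rearrangement cocycle α_T, and Ω = X × Γ the associated self-coupling with actions γ₁·(x,γ) = (γ₁·x, α_T(γ₁,x)γ) and (x,γ)·γ₂ = (x, γγ₂). For a measurable map ξ: X → Γ, the set X̄' = {(x, ξ_x) : x ∈ X} is a two-sided fundamental domain for Ω if and only if the map T'(x) = ξ_x⁻¹ · T(x) is a measure-preserving automorphism of (X,μ); in that case T' is an automorphism of the orbit relation with [T'] = [T] in the outer automorphism group, and α_{T'}(γ,x) = ξ_{γ·x}⁻¹ α_T(γ,x) ξ_x. -/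
open MeasureTheory Set

lemma sigmaFinite_count {Γ : Type*} [Countable Γ] [MeasurableSpace Γ] [MeasurableSingletonClass Γ] :
    SigmaFinite (Measure.count : Measure Γ) := by
  rcases isEmpty_or_nonempty Γ with h | h
  · infer_instance
  · obtain ⟨f, hf⟩ := exists_surjective_nat Γ
    refine ⟨⟨⟨fun n => f '' (Iic n), fun _ => trivial, fun n => ?_, ?_⟩⟩⟩
    · rw [Measure.count_apply_finite _ ((Set.finite_Iic n).image f)]
      exact ENNReal.natCast_lt_top _
    · rw [← image_iUnion, iUnion_Iic, image_univ, hf.range_eq]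

lemma ae_prod_count_iff {X Γ : Type*} [MeasurableSpace X] [MeasurableSpace Γ]
    [Countable Γ] [MeasurableSingletonClass Γ] (μ : Measure X)
    {P : X × Γ → Prop} :
    (∀ᵐ p ∂(μ.prod (Measure.count : Measure Γ)), P p) ↔ ∀ᵐ x ∂μ, ∀ γ : Γ, P (x, γ) := by
  haveI := sigmaFinite_count (Γ := Γ)
  constructor
  · intro h
    have hnull : (μ.prod Measure.count) {p | ¬ P p} = 0 := by
      simpa [ae_iff] using h
    set t := toMeasurable (μ.prod Measure.count) {p | ¬ P p} with ht
    have htm : MeasurableSet t := measurableSet_toMeasurable _ _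
    have htn : (μ.prod Measure.count) t = 0 := by
      rw [measure_toMeasurable]; exact hnull
    rw [Measure.prod_apply htm] at htn
    have h2 : ∀ᵐ x ∂μ, (Measure.count : Measure Γ) (Prod.mk x ⁻¹' t) = 0 := by
      exact (lintegral_eq_zero_iff (measurable_measure_prodMk_left htm)).mp htn
    filter_upwards [h2] with x hx γ
    by_contra hP
    have : (x, γ) ∈ t := subset_toMeasurable _ _ hP
    rw [Measure.count_eq_zero_iff] at hx
    exact absurd this (by simpa [← hx] using (Set.notMem_empty γ) ∘ (hx ▸ id)) -- fix
  · intro h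
    rw [ae_iff] at h ⊢
    set B := toMeasurable μ {x | ¬ ∀ γ : Γ, P (x, γ)}
    have hBn : μ B = 0 := by rw [measure_toMeasurable]; exact h
    refine measure_mono_null (fun p hp => ?_) (?_ : (μ.prod Measure.count) (B ×ˢ univ) = 0)
    · exact ⟨subset_toMeasurable _ _ (fun hall => hp (hall p.2)), trivial⟩
    · rw [Measure.prod_prod, hBn, zero_mul]


lemma glue_piecewise_equiv {X Γ : Type*} [MeasurableSpace X] (μ : Measure X)
    [IsProbabilityMeasure μ] [Countable Γ] [MeasurableSpace Γ] [MeasurableSingletonClass Γ]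
    (φ : Γ → X ≃ᵐ X) (hφ : ∀ γ, MeasurePreserving (φ γ) μ μ)
    (ξ : X → Γ) (hξ : Measurable ξ)
    (G : Set X) (hGm : MeasurableSet G) (hGc : μ Gᶜ = 0)
    (hInj : Set.InjOn (fun x => φ (ξ x) x) G) :
    ∃ e : X ≃ᵐ X, MeasurePreserving e μ μ ∧ ∀ᵐ x ∂μ, e x = φ (ξ x) x := by
  classical
  set g : X → X := fun x => φ (ξ x) x with hg
  have hgm : Measurable g := by
    have h1 : Measurable fun p : X × Γ => φ p.2 p.1 :=
      measurable_from_prod_countable_left fun γ => (φ γ).measurable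
    exact h1.comp (measurable_id.prodMk hξ)
  set S : Γ → Set X := fun γ => G ∩ ξ ⁻¹' {γ} with hS
  have hSm : ∀ γ, MeasurableSet (S γ) := fun γ => hGm.inter (hξ (measurableSet_singleton γ))
  have hSdisj : Pairwise (Function.onFun Disjoint S) := by
    intro γ δ hγδ
    refine Set.disjoint_left.mpr fun x hx hx' => hγδ ?_
    have h1 : ξ x = γ := hx.2
    have h2 : ξ x = δ := hx'.2
    rw [← h1, ← h2]
  have hSunion : ⋃ γ, S γ = G := by ext x; simp [hS]
  set I : Γ → Set X := fun γ => (φ γ).symm ⁻¹' (S γ) with hI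
  have hIm : ∀ γ, MeasurableSet (I γ) := fun γ => (φ γ).symm.measurable (hSm γ)
  have hgS : ∀ {γ x}, x ∈ S γ → g x = φ γ x := by
    rintro γ x ⟨_, hx⟩
    have : ξ x = γ := hx
    rw [hg]; simp [this]
  have hxS : ∀ {x}, x ∈ G → x ∈ S (ξ x) := fun hx => ⟨hx, rfl⟩
  have hgI : ∀ {x}, x ∈ G → g x ∈ I (ξ x) := by
    intro x hxG
    have : (φ (ξ x)).symm (g x) = x := (φ (ξ x)).symm_apply_apply x
    show (φ (ξ x)).symm (g x) ∈ S (ξ x)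
    rw [this]; exact hxS hxG
  have hmemI : ∀ {γ z}, z ∈ I γ → (φ γ).symm z ∈ S γ ∧ g ((φ γ).symm z) = z := by
    intro γ z hz
    have h1 : (φ γ).symm z ∈ S γ := hz
    exact ⟨h1, by rw [hgS h1, (φ γ).apply_symm_apply]⟩
  have hIdisj : Pairwise (Function.onFun Disjoint I) := by
    intro γ δ hγδ
    refine Set.disjoint_left.mpr fun z hz hz' => hγδ ?_
    obtain ⟨hx, hgx⟩ := hmemI hz
    obtain ⟨hy, hgy⟩ := hmemI hz'
    have := hInj hx.1 hy.1 (hgx.trans hgy.symm)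
    rw [← hx.2, ← hy.2, this]
  set H : Set X := ⋃ γ, I γ with hH
  have hHm : MeasurableSet H := MeasurableSet.iUnion hIm
  have hμI : ∀ γ, μ (I γ) = μ (S γ) := fun γ =>
    ((hφ γ).symm (φ γ)).measure_preimage (hSm γ).nullMeasurableSet
  have hμG : μ G = 1 := (prob_compl_eq_zero_iff hGm).mp hGc
  have hμH : μ H = 1 := by
    rw [hH, measure_iUnion hIdisj hIm]
    simp_rw [hμI]
    rw [← measure_iUnion hSdisj hSm, hSunion, hμG]
  have hHc : μ Hᶜ = 0 := (prob_compl_eq_zero_iff hHm).mpr hμH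
  -- preimage decomposition
  have hpre : ∀ A : Set X, g ⁻¹' A ∩ G = ⋃ γ, (S γ ∩ (φ γ) ⁻¹' A) := by
    intro A; ext x
    simp only [mem_inter_iff, mem_preimage, mem_iUnion]
    constructor
    · rintro ⟨hxA, hxG⟩
      exact ⟨ξ x, hxS hxG, by rwa [← hgS (hxS hxG)]⟩
    · rintro ⟨γ, hxS', hxA⟩
      exact ⟨by rwa [hgS hxS'], hxS'.1⟩
  -- g is measure preserving
  have hmap : Measure.map g μ = μ := by
    refine Measure.ext fun A hA => ?_
    rw [Measure.map_apply hgm hA]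
    have h1 : μ (g ⁻¹' A ∩ G) = μ (g ⁻¹' A) := by
      rw [← measure_inter_add_diff (g ⁻¹' A) hGm,
        measure_mono_null (diff_subset_compl _ _) hGc, add_zero]
    have h2 : μ (g ⁻¹' A ∩ G) = ∑' γ, μ (S γ ∩ (φ γ) ⁻¹' A) := by
      rw [hpre A, measure_iUnion
        (fun γ δ h => ((hSdisj h).mono inter_subset_left inter_subset_left))
        (fun γ => (hSm γ).inter ((φ γ).measurable hA))]
    have h3 : ∀ γ, μ (S γ ∩ (φ γ) ⁻¹' A) = μ (I γ ∩ A) := by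
      intro γ
      have hSeq : S γ ∩ (φ γ) ⁻¹' A = (φ γ) ⁻¹' (I γ ∩ A) := by
        rw [preimage_inter]
        congr 1
        ext z
        simp [hI]
      rw [hSeq, (hφ γ).measure_preimage ((hIm γ).inter hA).nullMeasurableSet]
    have h4 : μ (H ∩ A) = ∑' γ, μ (I γ ∩ A) := by
      rw [hH, iUnion_inter, measure_iUnion
        (fun γ δ h => ((hIdisj h).mono inter_subset_left inter_subset_left))
        (fun γ => (hIm γ).inter hA)]
    have h5 : μ (H ∩ A) = μ A := by
      rw [inter_comm, ← measure_inter_add_diff A hHm] at *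
      rw [measure_mono_null (diff_subset_compl _ _) hHc, add_zero]
    rw [← h1, h2]
    simp_rw [h3]
    rw [← h4, h5]
  -- the null saturation
  set B : ℕ → Set X := fun n => Nat.rec (Gᶜ ∪ Hᶜ)
    (fun _ Bn => (⋃ γ, (φ γ).symm ⁻¹' (Bn ∩ S γ)) ∪ (g ⁻¹' Bn ∩ G)) n with hB
  have hB0 : B 0 = Gᶜ ∪ Hᶜ := rfl
  have hBsucc : ∀ n, B (n + 1) = (⋃ γ, (φ γ).symm ⁻¹' (B n ∩ S γ)) ∪ (g ⁻¹' (B n) ∩ G) :=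
    fun n => rfl
  have hBm : ∀ n, MeasurableSet (B n) := by
    intro n; induction n with
    | zero => exact hGm.compl.union hHm.compl
    | succ n ih =>
      rw [hBsucc]
      exact (MeasurableSet.iUnion fun γ => (φ γ).symm.measurable (ih.inter (hSm γ))).union
        ((hgm ih).inter hGm)
  have hBn : ∀ n, μ (B n) = 0 := by
    intro n; induction n with
    | zero => exact measure_union_null hGc hHc
    | succ n ih =>
      rw [hBsucc]
      refine measure_union_null (measure_iUnion_null fun γ => ?_) ?_
      · rw [((hφ γ).symm (φ γ)).measure_preimage ((hBm n).inter (hSm γ)).nullMeasurableSet]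
        exact measure_mono_null inter_subset_left ih
      · rw [hpre (B n)]
        refine measure_iUnion_null fun γ => measure_mono_null inter_subset_right ?_
        rw [(hφ γ).measure_preimage (hBm n).nullMeasurableSet]
        exact ih
  set N : Set X := ⋃ n, B n with hN
  have hNm : MeasurableSet N := MeasurableSet.iUnion hBm
  have hNn : μ N = 0 := measure_iUnion_null hBn
  have hBN : ∀ n, B n ⊆ N := fun n => subset_iUnion B n
  have hNG : ∀ {x}, x ∉ N → x ∈ G := by
    intro x hx
    by_contra hxG
    exact hx (hBN 0 (Or.inl hxG))
  have hNH : ∀ {z}, z ∉ N → z ∈ H := by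
    intro z hz
    by_contra hzH
    exact hz (hBN 0 (Or.inr hzH))
  have hfwd : ∀ {x}, x ∉ N → g x ∉ N := by
    intro x hx hgx
    obtain ⟨n, hn⟩ := mem_iUnion.mp hgx
    exact hx (hBN (n + 1) (Or.inr ⟨hn, hNG hx⟩))
  have hback : ∀ {z}, z ∉ N → ∃ x, x ∉ N ∧ x ∈ G ∧ g x = z := by
    intro z hz
    obtain ⟨γ, hzI⟩ := mem_iUnion.mp (hNH hz)
    obtain ⟨hxS', hgx⟩ := hmemI hzI
    refine ⟨(φ γ).symm z, ?_, hxS'.1, hgx⟩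
    intro hxN
    obtain ⟨n, hn⟩ := mem_iUnion.mp hxN
    refine hz (hBN (n + 1) (Or.inl (mem_iUnion.mpr ⟨γ, ?_⟩)))
    exact ⟨hn, hxS'⟩
  -- the bijection
  set e : X → X := fun x => if x ∈ N then x else g x with he
  have hem : Measurable e := Measurable.ite hNm measurable_id hgm
  have heN : ∀ {x}, x ∈ N → e x = x := fun h => if_pos h
  have heg : ∀ {x}, x ∉ N → e x = g x := fun h => if_neg h
  have heinN : ∀ {x}, (e x ∈ N ↔ x ∈ N) := by
    intro x
    by_cases hx : x ∈ N
    · rw [heN hx]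
    · rw [heg hx]; exact iff_of_false (hfwd hx) hx
  have hbij : Function.Bijective e := by
    constructor
    · intro x y hxy
      by_cases hx : x ∈ N <;> by_cases hy : y ∈ N
      · rwa [heN hx, heN hy] at hxy
      · exact absurd (heinN.mp (show e y ∈ N by rw [← hxy, heN hx]; exact hx)) hy
      · exact absurd (heinN.mp (show e x ∈ N by rw [hxy, heN hy]; exact hy)) hx
      · rw [heg hx, heg hy] at hxy
        exact hInj (hNG hx) (hNG hy) hxy
    · intro z
      by_cases hz : z ∈ N
      · exact ⟨z, heN hz⟩
      · obtain ⟨x, hxN, _, hgx⟩ := hback hz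
        exact ⟨x, (heg hxN).trans hgx⟩
  set E : X ≃ X := Equiv.ofBijective e hbij with hE
  have hEe : ∀ x, E x = e x := fun _ => rfl
  have himg : ∀ A : Set X, MeasurableSet A → MeasurableSet (e '' A) := by
    intro A hA
    have himg_eq : e '' A = (A ∩ N) ∪ ⋃ γ, (φ γ).symm ⁻¹' ((A \ N) ∩ S γ) := by
      ext z
      constructor
      · rintro ⟨x, hxA, rfl⟩
        by_cases hx : x ∈ N
        · exact Or.inl (by rw [heN hx]; exact ⟨hxA, hx⟩)
        · refine Or.inr (mem_iUnion.mpr ⟨ξ x, ?_⟩)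
          have hxG := hNG hx
          have : (φ (ξ x)).symm (e x) = x := by rw [heg hx]; exact (φ (ξ x)).symm_apply_apply x
          show (φ (ξ x)).symm (e x) ∈ (A \ N) ∩ S (ξ x)
          rw [this]
          exact ⟨⟨hxA, hx⟩, hxS hxG⟩
      · rintro (⟨hzA, hzN⟩ | hz)
        · exact ⟨z, hzA, heN hzN⟩
        · obtain ⟨γ, hzγ⟩ := mem_iUnion.mp hz
          have h1 : (φ γ).symm z ∈ (A \ N) ∩ S γ := hzγ
          refine ⟨(φ γ).symm z, h1.1.1, ?_⟩
          rw [heg h1.1.2, hgS h1.2, (φ γ).apply_symm_apply]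
    rw [himg_eq]
    exact (hA.inter hNm).union
      (MeasurableSet.iUnion fun γ => (φ γ).symm.measurable (((hA.diff hNm)).inter (hSm γ)))
  have hinvm : Measurable E.symm := by
    intro A hA
    have : E.symm ⁻¹' A = e '' A := by
      ext z
      constructor
      · intro h
        exact ⟨E.symm z, h, by rw [← hEe, E.apply_symm_apply]⟩
      · rintro ⟨x, hx, rfl⟩
        show E.symm (E x) ∈ A
        rwa [E.symm_apply_apply]
    rw [this]
    exact himg A hA
  refine ⟨⟨E, hem, hinvm⟩, ?_, ?_⟩
  · refine ⟨hem, ?_⟩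
    have heg' : e =ᵐ[μ] g := by
      have : ∀ᵐ x ∂μ, x ∉ N := by
        rw [ae_iff]; simpa using hNn
      filter_upwards [this] with x hx
      exact heg hx
    show Measure.map e μ = μ
    rw [Measure.map_congr heg', hmap]
  · have : ∀ᵐ x ∂μ, x ∉ N := by rw [ae_iff]; simpa using hNn
    filter_upwards [this] with x hx
    exact heg hx

/-- In the self-coupling `Ω = X × Γ` associated to an orbit-relation
automorphism `T`, the graph `X̄' = {(x, ξ x)}` of a measurable `ξ : X → Γ` is a two-sided
fundamental domain iff `T' x = (ξ x)⁻¹ • T x` is a measure-preserving automorphism of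
`(X, μ)`; in that case `T'` is an orbit-relation automorphism in the same outer class as
`T`, with rearrangement cocycle `α_{T'} γ x = (ξ (γ • x))⁻¹ * α γ x * ξ x`. -/
theorem graph_two_sided_fundamental_domain_iff
    {X : Type*} [MeasurableSpace X] (μ : Measure X) [IsProbabilityMeasure μ]
    (Γ : Type*) [Group Γ] [Countable Γ] [MeasurableSpace Γ] [MeasurableSingletonClass Γ]
    [MulAction Γ X]
    (hmeas : ∀ γ : Γ, Measurable fun x : X => γ • x)
    (hmp : ∀ γ : Γ, MeasurePreserving (fun x : X => γ • x) μ μ)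
    (hfree : ∀ᵐ x ∂μ, ∀ γ : Γ, γ • x = x → γ = 1)
    (T : X ≃ᵐ X) (hT : MeasurePreserving T μ μ)
    (hTrel : ∀ᵐ x ∂μ, ∀ γ : Γ, ∃ δ : Γ, T (γ • x) = δ • T x)
    (hTrel' : ∀ᵐ x ∂μ, ∀ γ : Γ, ∃ δ : Γ, T.symm (γ • x) = δ • T.symm x)
    (α : Γ → X → Γ)
    (hα : ∀ γ : Γ, ∀ᵐ x ∂μ, T (γ • x) = α γ x • T x)
    (ξ : X → Γ) (hξ : Measurable ξ) :
    ((IsFundDom (μ.prod (Measure.count : Measure Γ))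
        (fun γ₁ p => (γ₁ • p.1, α γ₁ p.1 * p.2)) {p : X × Γ | p.2 = ξ p.1} ∧
      IsFundDom (μ.prod (Measure.count : Measure Γ))
        (fun γ₂ p => (p.1, p.2 * γ₂)) {p : X × Γ | p.2 = ξ p.1}) ↔
      (∃ e : X ≃ᵐ X, MeasurePreserving e μ μ ∧ ∀ᵐ x ∂μ, e x = (ξ x)⁻¹ • T x)) ∧
    (∀ᵐ x ∂μ, ∃ δ : Γ, (ξ x)⁻¹ • T x = δ • T x) ∧
    (∀ γ : Γ, ∀ᵐ x ∂μ,
      (ξ (γ • x))⁻¹ • T (γ • x) = ((ξ (γ • x))⁻¹ * α γ x * ξ x) • ((ξ x)⁻¹ • T x)) := by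
  classical
  haveI := sigmaFinite_count (Γ := Γ)
  -- group cancellation from pointwise freeness
  have cancel : ∀ {y : X}, (∀ γ : Γ, γ • y = y → γ = 1) →
      ∀ {γ δ : Γ}, γ • y = δ • y → γ = δ := by
    intro y hy γ δ h
    have h1 : (δ⁻¹ * γ) • y = y := by rw [mul_smul, h, inv_smul_smul]
    exact (inv_mul_eq_one.mp (hy _ h1)).symm
  -- common a.e. facts
  have hαall : ∀ᵐ x ∂μ, ∀ γ : Γ, T (γ • x) = α γ x • T x := ae_all_iff.mpr hα
  have freeT : ∀ᵐ x ∂μ, ∀ γ : Γ, γ • T x = T x → γ = 1 :=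
    hT.quasiMeasurePreserving.ae hfree
  have hrelT : ∀ᵐ x ∂μ, ∀ γ : Γ, ∃ δ : Γ, T.symm (γ • T x) = δ • x := by
    filter_upwards [hT.quasiMeasurePreserving.ae hTrel'] with x hx γ
    obtain ⟨δ, hδ⟩ := hx γ
    exact ⟨δ, by rwa [T.symm_apply_apply] at hδ⟩
  -- the graph is measurable
  have hD : MeasurableSet {p : X × Γ | p.2 = ξ p.1} := by
    have hDeq : {p : X × Γ | p.2 = ξ p.1} = ⋃ γ : Γ, (ξ ⁻¹' {γ}) ×ˢ ({γ} : Set Γ) := by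
      ext p
      simp only [mem_setOf_eq, mem_iUnion, mem_prod, mem_preimage, mem_singleton_iff]
      constructor
      · intro h; exact ⟨ξ p.1, rfl, h⟩
      · rintro ⟨γ, h1, h2⟩; rw [h2, h1]
    rw [hDeq]
    exact MeasurableSet.iUnion fun γ =>
      (hξ (measurableSet_singleton γ)).prod (measurableSet_singleton γ)
  -- the right fundamental-domain condition always holds
  have hright : IsFundDom (μ.prod (Measure.count : Measure Γ))
      (fun γ₂ p => (p.1, p.2 * γ₂)) {p : X × Γ | p.2 = ξ p.1} := by
    refine ⟨hD, Filter.Eventually.of_forall fun p => ?_⟩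
    refine ⟨p.2⁻¹ * ξ p.1, ?_, fun y hy => ?_⟩
    · show p.2 * (p.2⁻¹ * ξ p.1) = ξ p.1
      rw [mul_inv_cancel_left]
    · exact eq_inv_mul_iff_mul_eq.mpr hy
  refine ⟨?_, Filter.Eventually.of_forall fun x => ⟨(ξ x)⁻¹, rfl⟩, ?_⟩
  swap
  · intro γ
    filter_upwards [hα γ] with x hx
    rw [hx, smul_smul, smul_smul]
    congr 1
    group
  constructor
  · -- forward direction
    rintro ⟨⟨_, hleft⟩, _⟩
    have hleft' : ∀ᵐ x ∂μ, ∀ γ : Γ, ∃! γ₁ : Γ, α γ₁ x * γ = ξ (γ₁ • x) :=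
      (ae_prod_count_iff μ).mp hleft
    -- the good set
    have hgood : ∀ᵐ x ∂μ, (∀ γ : Γ, ∃! γ₁ : Γ, α γ₁ x * γ = ξ (γ₁ • x)) ∧
        (∀ γ : Γ, T (γ • x) = α γ x • T x) ∧ (∀ γ : Γ, γ • T x = T x → γ = 1) ∧
        (∀ γ : Γ, ∃ δ : Γ, T.symm (γ • T x) = δ • x) := by
      filter_upwards [hleft', hαall, freeT, hrelT] with x h1 h2 h3 h4
      exact ⟨h1, h2, h3, h4⟩
    set Bad := {x : X | ¬ ((∀ γ : Γ, ∃! γ₁ : Γ, α γ₁ x * γ = ξ (γ₁ • x)) ∧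
        (∀ γ : Γ, T (γ • x) = α γ x • T x) ∧ (∀ γ : Γ, γ • T x = T x → γ = 1) ∧
        (∀ γ : Γ, ∃ δ : Γ, T.symm (γ • T x) = δ • x))} with hBad
    have hBadn : μ Bad = 0 := by rw [hBad, ← ae_iff]; exact hgood
    set G := (toMeasurable μ Bad)ᶜ with hG
    have hGm : MeasurableSet G := (measurableSet_toMeasurable μ Bad).compl
    have hGc : μ Gᶜ = 0 := by
      rw [hG, compl_compl, measure_toMeasurable]; exact hBadn
    have hGP : ∀ x ∈ G, (∀ γ : Γ, ∃! γ₁ : Γ, α γ₁ x * γ = ξ (γ₁ • x)) ∧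
        (∀ γ : Γ, T (γ • x) = α γ x • T x) ∧ (∀ γ : Γ, γ • T x = T x → γ = 1) ∧
        (∀ γ : Γ, ∃ δ : Γ, T.symm (γ • T x) = δ • x) := by
      intro x hx
      by_contra hP
      exact hx (subset_toMeasurable μ Bad hP)
    -- the piecewise measurable equivalences
    set sm : Γ → X ≃ᵐ X := fun γ =>
      ⟨⟨fun x => γ • x, fun x => γ⁻¹ • x, fun x => inv_smul_smul γ x,
        fun x => smul_inv_smul γ x⟩, hmeas γ, hmeas γ⁻¹⟩ with hsm
    set φ : Γ → X ≃ᵐ X := fun γ => T.trans (sm γ⁻¹) with hφdef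
    have hφmp : ∀ γ : Γ, MeasurePreserving (φ γ) μ μ := fun γ => (hmp γ⁻¹).comp hT
    have hφapp : ∀ γ x, φ γ x = γ⁻¹ • T x := fun γ x => rfl
    have hInj : Set.InjOn (fun x => φ (ξ x) x) G := by
      intro x hx y hy hxy
      obtain ⟨hFDx, hαx, hfrTx, hrelx⟩ := hGP x hx
      obtain ⟨hFDy, hαy, hfrTy, hrely⟩ := hGP y hy
      simp only [hφapp] at hxy
      -- hxy : (ξ x)⁻¹ • T x = (ξ y)⁻¹ • T y
      have hTx : (ξ x * (ξ y)⁻¹) • T y = T x := by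
        rw [mul_smul, ← hxy, smul_inv_smul]
      obtain ⟨δ', hδ'⟩ := hrely (ξ x * (ξ y)⁻¹)
      rw [hTx, T.symm_apply_apply] at hδ'
      -- hδ' : x = δ' • y
      obtain ⟨γ₁, hγ₁, huniq⟩ := hFDy (ξ y)
      have hα1 : α 1 y = 1 := by
        have h1 := hαy 1
        rw [one_smul] at h1
        exact hfrTy _ h1.symm
      have h1sat : (1 : Γ) = γ₁ := huniq 1 (by show α 1 y * ξ y = ξ ((1:Γ) • y); rw [hα1, one_mul, one_smul])
      rw [hδ'] at hxy
      -- hxy : (ξ (δ' • y))⁻¹ • T (δ' • y) = (ξ y)⁻¹ • T y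
      rw [hαy δ', smul_smul] at hxy
      have h4 : (ξ (δ' • y))⁻¹ * α δ' y = (ξ y)⁻¹ := cancel hfrTy hxy
      have hδsat : δ' = γ₁ := by
        refine huniq δ' ?_
        have h5 : α δ' y = ξ (δ' • y) * (ξ y)⁻¹ := by
          rw [← h4, mul_inv_cancel_left]
        show α δ' y * ξ y = ξ (δ' • y)
        rw [h5, inv_mul_cancel_right]
      rw [hδ', hδsat, ← h1sat, one_smul]
    obtain ⟨e, hemp, hee⟩ := glue_piecewise_equiv μ φ hφmp ξ hξ G hGm hGc hInj
    exact ⟨e, hemp, hee⟩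
  · -- reverse direction
    rintro ⟨e, hemp, hee⟩
    refine ⟨⟨hD, ?_⟩, hright⟩
    refine (ae_prod_count_iff μ).mpr ?_
    have hA : ∀ᵐ x ∂μ, ∀ γ₁ : Γ, e (γ₁ • x) = (ξ (γ₁ • x))⁻¹ • T (γ₁ • x) := by
      rw [ae_all_iff]
      intro γ₁
      exact (hmp γ₁).quasiMeasurePreserving.ae hee
    have hEsym : ∀ᵐ x ∂μ, ∀ γ : Γ,
        e (e.symm (γ • T x)) = (ξ (e.symm (γ • T x)))⁻¹ • T (e.symm (γ • T x)) := by
      rw [ae_all_iff]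
      intro γ
      exact ((hemp.symm e).comp ((hmp γ).comp hT)).quasiMeasurePreserving.ae hee
    filter_upwards [hA, hαall, hfree, freeT, hrelT, hEsym]
      with x hAx hαx hfrx hfrTx hrelx hEx γ
    -- existence
    set y := e.symm (γ⁻¹ • T x) with hy
    have h1 : e y = γ⁻¹ • T x := e.apply_symm_apply _
    have h2 : e y = (ξ y)⁻¹ • T y := hEx γ⁻¹
    have h3 : T y = (ξ y * γ⁻¹) • T x := by
      rw [mul_smul, ← h1, h2, smul_inv_smul]
    obtain ⟨γ₁, hγ₁⟩ := hrelx (ξ y * γ⁻¹)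
    have h4 : y = γ₁ • x := by rw [← hγ₁, ← h3, T.symm_apply_apply]
    have key : ∀ γ' : Γ, α γ' x * γ = ξ (γ' • x) → e (γ' • x) = γ⁻¹ • T x := by
      intro γ' h
      rw [hAx γ', hαx γ', smul_smul, ← h]
      congr 1
      group
    refine ⟨γ₁, ?_, ?_⟩
    · show α γ₁ x * γ = ξ (γ₁ • x)
      have h5 : T y = α γ₁ x • T x := by rw [h4]; exact hαx γ₁
      have h6 : α γ₁ x = ξ y * γ⁻¹ := cancel hfrTx (h5.symm.trans h3)
      rw [h6, inv_mul_cancel_right, h4]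
    · intro γ₂ hγ₂
      have e1 : e (γ₂ • x) = γ⁻¹ • T x := key γ₂ hγ₂
      have e2 : e (γ₁ • x) = γ⁻¹ • T x := by rw [← h4]; exact h1
      have h7 : γ₂ • x = γ₁ • x := e.injective (e1.trans e2.symm)
      exact cancel hfrx h7
end

section
/- Let Γ be an irreducible lattice in a semisimple connected center-free real Lie group G without compact factors, acting on (G/Γ, m_{G/Γ}) by left translations. Fix a two-sided Borel fundamental domain X ⊂ G for Γ (a set which is a fundamental domain for both G/Γ and Γ\G), and define I: X → X by I(x) = the unique point of x⁻¹Γ ∩ X. Then I is a measurable bijection of X satisfying I(γ·x) = λ(γ,x)·I(x), where λ: Γ × X → Γ is the cocycle defined by γx ∈ X·λ(γ,x) and γ·x = γxλ(γ,x)⁻¹ denotes the induced Γ-action on X. In particular I is an automorphism of the orbit relation of the Γ-action on X ≅ G/Γ, with rearrangement cocycle α_I = λ. -/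
open MeasureTheory Set

/-!
Since `X` meets every right coset `gΓ` exactly once, `I x` is characterised as the point `z ∈ X`
with `x z ∈ Γ`; since `X⁻¹` does too, `X` also meets every left coset `Γg` at most once.
Injectivity of `I` follows because `I x = I y` forces `Γx = Γy`, surjectivity because every
`y ∈ X` is `I` of the representative of `Γy⁻¹`, and measurability because `I` agrees with
`x ↦ x⁻¹γ` on the measurable set `{x | x⁻¹γ ∈ X}`, for each of the countably many `γ`.
For the cocycle identity, the coset `(γ x λ(γ,x)⁻¹)⁻¹Γ = λ(γ,x) x⁻¹Γ` contains `λ(γ,x) I(x)`,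
hence also its representative `λ(γ,x) I(x) λ(λ(γ,x), I(x))⁻¹` in `X`.
-/

section FundamentalDomain

variable {G : Type*} [Group G] {Γ : Subgroup G} {X : Set G}

theorem eq_of_mem_of_inv_mul_mem (hX : ∀ g : G, ∃! γ : Γ, g * (γ : G) ∈ X)
    {a b : G} (ha : a ∈ X) (hb : b ∈ X) (hab : a⁻¹ * b ∈ Γ) : a = b := by
  have h : (1 : Γ) = ⟨a⁻¹ * b, hab⟩ :=
    (hX a).unique (by simpa using ha) (by simpa using hb)
  exact inv_mul_eq_one.mp (congrArg Subtype.val h).symm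

theorem eq_of_mem_of_mul_inv_mem (hX' : ∀ g : G, ∃! γ : Γ, g * (γ : G) ∈ X⁻¹)
    {a b : G} (ha : a ∈ X) (hb : b ∈ X) (hab : a * b⁻¹ ∈ Γ) : a = b :=
  inv_injective <| eq_of_mem_of_inv_mul_mem hX' (by simpa using ha) (by simpa using hb)
    (by simpa using hab)

variable {I : G → G}

theorem flip_eq_of_mem (hX : ∀ g : G, ∃! γ : Γ, g * (γ : G) ∈ X)
    (hI : ∀ x ∈ X, I x ∈ X ∧ x * I x ∈ Γ) {x z : G} (hx : x ∈ X) (hz : z ∈ X)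
    (hxz : x * z ∈ Γ) : I x = z := by
  refine eq_of_mem_of_inv_mul_mem hX (hI x hx).1 hz ?_
  have h : (I x)⁻¹ * z = (x * I x)⁻¹ * (x * z) := by group
  rw [h]
  exact Γ.mul_mem (Γ.inv_mem (hI x hx).2) hxz

theorem bijOn_flip (hX : ∀ g : G, ∃! γ : Γ, g * (γ : G) ∈ X)
    (hX' : ∀ g : G, ∃! γ : Γ, g * (γ : G) ∈ X⁻¹) (hI : ∀ x ∈ X, I x ∈ X ∧ x * I x ∈ Γ) :
    BijOn I X X := by
  refine ⟨fun x hx => (hI x hx).1, fun x hx y hy hxy => ?_, fun y hy => ?_⟩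
  · refine eq_of_mem_of_mul_inv_mem hX' hx hy ?_
    have h : x * y⁻¹ = (x * I x) * (y * I y)⁻¹ := by rw [hxy]; group
    rw [h]
    exact Γ.mul_mem (hI x hx).2 (Γ.inv_mem (hI y hy).2)
  · obtain ⟨γ, hγ, -⟩ := hX' y
    have hxX : (y * γ)⁻¹ ∈ X := hγ
    refine ⟨(y * γ)⁻¹, hxX, flip_eq_of_mem hX hI hxX hy ?_⟩
    simp

theorem measurable_domRestrict_flip [MeasurableSpace G]
    (hmulmeas : Measurable fun p : G × G => p.1 * p.2) (hinvmeas : Measurable fun g : G => g⁻¹)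
    [Countable Γ] (hXmeas : MeasurableSet X) (hX : ∀ g : G, ∃! γ : Γ, g * (γ : G) ∈ X)
    (hI : ∀ x ∈ X, I x ∈ X ∧ x * I x ∈ Γ) :
    Measurable (X.domRestrict I) := by
  intro s hs
  have hpre : X.domRestrict I ⁻¹' s =
      ⋃ γ : Γ, (fun x : X => (x : G)⁻¹ * (γ : G)) ⁻¹' (X ∩ s) := by
    ext ⟨x, hx⟩
    simp only [mem_preimage, domRestrict_apply, mem_iUnion, mem_inter_iff]
    constructor
    · intro hIx
      refine ⟨⟨x * I x, (hI x hx).2⟩, ?_⟩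
      simpa using And.intro (hI x hx).1 hIx
    · rintro ⟨γ, hγX, hγs⟩
      rwa [flip_eq_of_mem hX hI hx hγX (by simp)]
  rw [hpre]
  refine MeasurableSet.iUnion fun γ => ?_
  have hm : Measurable fun x : X => (x : G)⁻¹ * (γ : G) :=
    hmulmeas.comp ((hinvmeas.comp measurable_subtype_coe).prodMk measurable_const)
  exact hm (hXmeas.inter hs)

theorem flip_mul_mul_inv (hX : ∀ g : G, ∃! γ : Γ, g * (γ : G) ∈ X)
    (hI : ∀ x ∈ X, I x ∈ X ∧ x * I x ∈ Γ) {x : G} (hx : x ∈ X) (γ l m : Γ)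
    (hy : (γ : G) * x * (l : G)⁻¹ ∈ X) (hz : (l : G) * I x * (m : G)⁻¹ ∈ X) :
    I ((γ : G) * x * (l : G)⁻¹) = (l : G) * I x * (m : G)⁻¹ := by
  refine flip_eq_of_mem hX hI hy hz ?_
  have h : (γ : G) * x * (l : G)⁻¹ * ((l : G) * I x * (m : G)⁻¹) =
      γ * (x * I x) * (m : G)⁻¹ := by group
  rw [h]
  exact Γ.mul_mem (Γ.mul_mem γ.2 (hI x hx).2) (Γ.inv_mem m.2)

end FundamentalDomain

/-- Let `Γ` be a lattice in `G` and `X ⊆ G` a two-sided Borel fundamental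
domain (both `X` and `X⁻¹` are fundamental domains for the right `Γ`-action). Let
`I : X → X`, `I x = x⁻¹Γ ∩ X`, and let `λ : Γ × X → Γ` be the cocycle with
`γ x ∈ X·λ(γ,x)`, so that `γ · x = γ x λ(γ,x)⁻¹` is the induced `Γ`-action on `X`. Then `I`
is a measurable bijection of `X` satisfying `I(γ · x) = λ(γ,x) · I(x)`; in particular `I` is
an automorphism of the orbit relation of `(X, Γ)` with rearrangement cocycle `α_I = λ`. -/
theorem flip_is_orbit_relation_automorphism
    {G : Type*} [Group G] [MeasurableSpace G]
    (hmulmeas : Measurable fun p : G × G => p.1 * p.2)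
    (hinvmeas : Measurable fun g : G => g⁻¹)
    (Γ : Subgroup G) [Countable Γ]
    (X : Set G) (hXmeas : MeasurableSet X)
    (hX : ∀ g : G, ∃! γ : Γ, g * (γ : G) ∈ X)
    (hX' : ∀ g : G, ∃! γ : Γ, g * (γ : G) ∈ X⁻¹)
    (I : G → G) (hI : ∀ x ∈ X, I x ∈ X ∧ ∃ γ : Γ, I x = x⁻¹ * (γ : G))
    (lam : Γ → G → Γ)
    (hlam : ∀ (γ : Γ), ∀ x ∈ X, (γ : G) * x * ((lam γ x : Γ) : G)⁻¹ ∈ X) :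
    Set.BijOn I X X ∧
    Measurable (X.restrict I) ∧
    (∀ (γ : Γ), ∀ x ∈ X,
      I ((γ : G) * x * ((lam γ x : Γ) : G)⁻¹) =
        ((lam γ x : Γ) : G) * I x * ((lam (lam γ x) (I x) : Γ) : G)⁻¹) := by
  have hI' : ∀ x ∈ X, I x ∈ X ∧ x * I x ∈ Γ := fun x hx => by
    obtain ⟨hIx, γ, hγ⟩ := hI x hx
    exact ⟨hIx, by simp [hγ]⟩
  exact ⟨bijOn_flip hX hX' hI', measurable_domRestrict_flip hmulmeas hinvmeas hXmeas hX hI',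
    fun γ x hx => flip_mul_mul_inv hX hI' hx γ _ _ (hlam γ x hx) (hlam _ _ (hI' x hx).1)⟩
end
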